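/- arXiv:2203.12916 — 5 statements merged into one kernel-verified Lean document; each statement's English description precedes it below -/
import Mathlib

section
/- Let L ≥ 2, n ≥ 2 be integers and for m = Σ_{i=0}^{s} a_i L^{b_i} (base-L decomposition with b_0 > ... > b_s ≥ 0, a_i ∈ {1,...,L-1}) define ξ_m(K_L^n) = (L-1) n m − ex_m(K_L^n), where ex_m(K_L^n) = Σ_{i=0}^{s} [(L-1) a_i b_i L^{b_i} + (a_i−1) a_i L^{b_i}] + 2 Σ_{i=0}^{s-1} Σ_{k=i+1}^{s} a_i a_k L^{b_k}. Then for all 1 ≤ m < L^{⌊n/2⌋}, ξ_{m+1}(K_L^n) − ξ_m(K_L^n) ≥ 0, i.e., ξ_m(K_L^n) is nondecreasing on the interval 1 ≤ m ≤ L^{⌊n/2⌋}. -/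
/-- The base-`L` digit of `m` at position `j`, as an integer. -/
def dig (L m j : ℕ) : ℤ := ((Nat.digits L m).getD j 0 : ℤ)

/-- `ex_m(K_L^n)`: twice the maximum number of edges of an induced subgraph on `m`
vertices of the Hamming graph `K_L^n`, given by the explicit base-`L` formula
(it does not depend on `n`). -/
def exm (L m : ℕ) : ℤ :=
  (∑ j ∈ Finset.range (Nat.digits L m).length,
    (((L : ℤ) - 1) * dig L m j * j * (L : ℤ) ^ j + (dig L m j - 1) * dig L m j * (L : ℤ) ^ j))
  + 2 * ∑ j ∈ Finset.range (Nat.digits L m).length, ∑ j' ∈ Finset.range j,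
      dig L m j * dig L m j' * (L : ℤ) ^ j'

/-- `ξ_m(K_L^n) = (L-1) n m - ex_m(K_L^n)`. -/
def xi (L n m : ℕ) : ℤ := ((L : ℤ) - 1) * n * m - exm L m

/-!
Write `s(m)` for the base-`L` digit sum of `m`. Splitting off the last digit, `m = r + L q` with
`r < L`, the formula for `ex` satisfies `ex(r + L q) = L ex(q) + L (L - 1) q + 2 r s(q) + r (r - 1)`.
Comparing this at `m` and `m + 1` (when `r = L - 1` the carry reduces the comparison to `q` and
`q + 1`) gives `ex(m + 1) - ex(m) = 2 s(m)` by strong induction, so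
`ξ(m + 1) - ξ(m) = (L - 1) n - 2 s(m)`. For `m < L ^ ⌊n/2⌋` the number `m` has at most `⌊n/2⌋`
digits, each at most `L - 1`, hence `2 s(m) ≤ (L - 1) n`.
-/

open Finset

theorem sum_range_getD_eq_sum (l : List ℕ) :
    ∑ j ∈ range l.length, (l.getD j 0 : ℤ) = l.sum := by
  induction l with
  | nil => simp
  | cons a l ih =>
    rw [List.length_cons, sum_range_succ']
    simp only [List.getD_cons_succ, List.getD_cons_zero, ih, List.sum_cons]
    push_cast
    ring

theorem sum_range_getD_mul_pow_eq_ofDigits (L : ℕ) (l : List ℕ) :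
    ∑ j ∈ range l.length, (l.getD j 0 : ℤ) * (L : ℤ) ^ j = Nat.ofDigits L l := by
  induction l with
  | nil => simp
  | cons a l ih =>
    rw [List.length_cons, sum_range_succ', Nat.ofDigits_cons]
    simp only [List.getD_cons_succ, List.getD_cons_zero, pow_succ, ← mul_assoc, ← sum_mul, ih]
    push_cast
    ring

def exmDigits (L : ℕ) (l : List ℕ) : ℤ :=
  (∑ j ∈ range l.length,
    (((L : ℤ) - 1) * l.getD j 0 * j * (L : ℤ) ^ j
      + ((l.getD j 0 : ℤ) - 1) * l.getD j 0 * (L : ℤ) ^ j))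
  + 2 * ∑ j ∈ range l.length, ∑ j' ∈ range j, (l.getD j 0 : ℤ) * l.getD j' 0 * (L : ℤ) ^ j'

theorem exm_eq_exmDigits (L m : ℕ) : exm L m = exmDigits L (Nat.digits L m) := rfl

theorem exmDigits_cons (L r : ℕ) (l : List ℕ) :
    exmDigits L (r :: l) = L * exmDigits L l + L * ((L : ℤ) - 1) * Nat.ofDigits L l
      + 2 * r * l.sum + r * ((r : ℤ) - 1) := by
  rw [← sum_range_getD_mul_pow_eq_ofDigits, ← sum_range_getD_eq_sum, exmDigits, exmDigits,
    List.length_cons]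
  simp only [sum_range_succ', List.getD_cons_succ, List.getD_cons_zero, range_zero, sum_empty]
  push_cast
  simp only [mul_zero, add_zero, pow_zero, mul_one, mul_add, mul_sum, ← sum_add_distrib]
  rw [add_right_comm, ← sum_add_distrib]
  congr 1
  · refine sum_congr rfl fun j _ => ?_
    have : ∀ i, 2 * ((l.getD j 0 : ℤ) * l.getD i 0 * (L : ℤ) ^ (i + 1))
        = L * (2 * ((l.getD j 0 : ℤ) * l.getD i 0 * (L : ℤ) ^ i)) := fun i => by ring
    simp only [this]
    ring
  · ring

theorem digits_add_mul {L : ℕ} (hL : 1 < L) {r : ℕ} (hr : r < L) (q : ℕ) :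
    Nat.digits L (r + L * q) = if r = 0 ∧ q = 0 then [] else r :: Nat.digits L q := by
  split_ifs with h
  · simp [h.1, h.2]
  · exact Nat.digits_add L hL r q hr (not_and_or.mp h)

theorem digits_sum_add_mul {L : ℕ} (hL : 1 < L) {r : ℕ} (hr : r < L) (q : ℕ) :
    (Nat.digits L (r + L * q)).sum = r + (Nat.digits L q).sum := by
  rw [digits_add_mul hL hr]
  split_ifs with h
  · simp [h.1, h.2]
  · rfl

theorem exm_zero (L : ℕ) : exm L 0 = 0 := by
  simp [exm]

theorem exm_add_mul {L : ℕ} (hL : 1 < L) {r : ℕ} (hr : r < L) (q : ℕ) :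
    exm L (r + L * q) = L * exm L q + L * ((L : ℤ) - 1) * q
      + 2 * r * (Nat.digits L q).sum + r * ((r : ℤ) - 1) := by
  rw [exm_eq_exmDigits, digits_add_mul hL hr]
  split_ifs with h
  · simp [h.1, h.2, exmDigits, exm_zero]
  · rw [exmDigits_cons, Nat.ofDigits_digits, ← exm_eq_exmDigits]

theorem exm_succ_sub_exm {L : ℕ} (hL : 1 < L) (m : ℕ) :
    exm L (m + 1) - exm L m = 2 * (Nat.digits L m).sum := by
  induction m using Nat.strong_induction_on with
  | _ m ih =>
    obtain ⟨r, q, hr, rfl⟩ : ∃ r q, r < L ∧ m = r + L * q :=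
      ⟨m % L, m / L, Nat.mod_lt m (by omega), (Nat.mod_add_div m L).symm⟩
    rw [digits_sum_add_mul hL hr, exm_add_mul hL hr]
    rcases Nat.lt_or_ge (r + 1) L with hr' | hr'
    · rw [show r + L * q + 1 = (r + 1) + L * q by ring, exm_add_mul hL hr']
      push_cast
      ring
    · obtain rfl : r = L - 1 := by omega
      have hq : q < L - 1 + L * q := by nlinarith
      rw [show L - 1 + L * q + 1 = 0 + L * (q + 1) by rw [Nat.mul_succ]; omega,
        exm_add_mul hL (by omega)]
      simp only [Nat.cast_add, Nat.cast_sub hL.le, Nat.cast_one, Nat.cast_zero]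
      linear_combination (L : ℤ) * ih q hq

theorem xi_succ_sub_xi {L : ℕ} (hL : 1 < L) (n m : ℕ) :
    xi L n (m + 1) - xi L n m = ((L : ℤ) - 1) * n - 2 * (Nat.digits L m).sum := by
  rw [xi, xi, ← exm_succ_sub_exm hL]
  push_cast
  ring

theorem digits_sum_le_of_lt_pow {L : ℕ} (hL : 1 < L) {m k : ℕ} (hm : m < L ^ k) :
    (Nat.digits L m).sum ≤ (L - 1) * k := by
  calc (Nat.digits L m).sum
      ≤ (Nat.digits L m).length • (L - 1) :=
        List.sum_le_card_nsmul _ _ fun d hd => Nat.le_sub_one_of_lt (Nat.digits_lt_base hL hd)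
    _ ≤ k * (L - 1) := Nat.mul_le_mul_right _ ((Nat.digits_length_le_iff hL m).mpr hm)
    _ = (L - 1) * k := Nat.mul_comm _ _

theorem stmt1_general (L n : ℕ) (hL : 2 ≤ L)
    (m : ℕ) (hm2 : m < L ^ (n / 2)) :
    0 ≤ xi L n (m + 1) - xi L n m := by
  have hsum : 2 * (Nat.digits L m).sum ≤ (L - 1) * n :=
    calc 2 * (Nat.digits L m).sum
        ≤ 2 * ((L - 1) * (n / 2)) := Nat.mul_le_mul_left 2 (digits_sum_le_of_lt_pow hL hm2)
      _ = (L - 1) * (2 * (n / 2)) := by ring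
      _ ≤ (L - 1) * n := Nat.mul_le_mul_left _ (Nat.mul_div_le n 2)
  rw [xi_succ_sub_xi hL, sub_nonneg, ← Nat.cast_pred (by omega)]
  exact_mod_cast hsum

theorem stmt1 (L n : ℕ) (hL : 2 ≤ L) (hn : 2 ≤ n)
    (m : ℕ) (hm1 : 1 ≤ m) (hm2 : m < L ^ (n / 2)) :
    0 ≤ xi L n (m + 1) - xi L n m :=
  stmt1_general L n hL m hm2
end

section
/- Let L ≥ 2, n ≥ 2, 0 ≤ g ≤ L−1, 0 ≤ t ≤ n−2, and 0 < h_0 < L^t. Writing h_0 = Σ a_i' L^{b_i'} in base L with all b_i' < t, define ex_{h_0}(K_L^{n−2}) via the standard formula and ξ_{h_0}(K_L^{n−2}) = (L−1)(n−2)h_0 − ex_{h_0}(K_L^{n−2}) ≥ 0. Then ξ_{gL^t + h_0}(K_L^n) − ξ_{gL^t}(K_L^n) = (L−1)n h_0 − 2g h_0 − ex_{h_0}(K_L^n) ≥ ξ_{h_0}(K_L^{n−2}) ≥ 0. -/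
/-!
Everything follows from peeling off the leading base-`L` digit: for `a < L` and `r < L ^ b`,
`ex_{a L^b + r} = ex_r + ((L-1) a b + (a-1) a) L^b + 2 a r`. Applied to `g L^t + h_0` and to
`g L^t` it gives the identity; applied along the digits of `m < L^N` it shows, by induction on
`N`, that `ξ_m(K_L^N)` grows at each step by `(L-1-2a) r + a (L-a) L^N ≥ 0`.
-/

open Finset

theorem Nat.sum_range_div_pow_mod_mul_pow (L n b : ℕ) :
    ∑ j ∈ range b, n / L ^ j % L * L ^ j = n % L ^ b := by
  induction b with
  | zero => simp [Nat.mod_one]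
  | succ b ih => rw [sum_range_succ, ih, Nat.mod_pow_succ, mul_comm (L ^ b)]

/-- `exm L m` is `exSum L (dig L m) (Nat.digits L m).length`. -/
def exSum (L : ℕ) (d : ℕ → ℤ) (N : ℕ) : ℤ :=
  (∑ j ∈ range N, (((L : ℤ) - 1) * d j * j * (L : ℤ) ^ j + (d j - 1) * d j * (L : ℤ) ^ j))
  + 2 * ∑ j ∈ range N, ∑ j' ∈ range j, d j * d j' * (L : ℤ) ^ j'

theorem exSum_succ (L : ℕ) (d : ℕ → ℤ) (N : ℕ) :
    exSum L d (N + 1) = exSum L d N + (((L : ℤ) - 1) * N + (d N - 1)) * d N * (L : ℤ) ^ N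
      + 2 * d N * ∑ j ∈ range N, d j * (L : ℤ) ^ j := by
  simp_rw [exSum, sum_range_succ, mul_assoc (d N), ← mul_sum]
  ring

theorem exSum_congr (L : ℕ) {d e : ℕ → ℤ} {N : ℕ} (h : ∀ j < N, d j = e j) :
    exSum L d N = exSum L e N := by
  unfold exSum
  congr 1
  · exact sum_congr rfl fun j hj => by rw [h j (mem_range.1 hj)]
  · congr 1
    exact sum_congr rfl fun j hj => sum_congr rfl fun j' hj' => by
      rw [h j (mem_range.1 hj), h j' ((mem_range.1 hj').trans (mem_range.1 hj))]

section digits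

variable {L : ℕ} (hL : 2 ≤ L)
include hL

theorem dig_eq (m j : ℕ) : dig L m j = (m / L ^ j % L : ℕ) := by
  rw [dig, Nat.getD_digits m j hL]

theorem exm_eq_exSum {m N : ℕ} (h : m < L ^ N) : exm L m = exSum L (dig L m) N := by
  induction N, (Nat.digits_length_le_iff hL m).2 h using Nat.le_induction with
  | base => rfl
  | succ N hN ih =>
    rw [exSum_succ, ← ih ((Nat.digits_length_le_iff hL m).1 hN), dig,
      List.getD_eq_default _ _ hN]
    simp

theorem sum_dig_mul_pow {r b : ℕ} (hr : r < L ^ b) :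
    ∑ j ∈ range b, dig L r j * (L : ℤ) ^ j = r := by
  simp only [dig_eq hL]
  exact_mod_cast (Nat.sum_range_div_pow_mod_mul_pow L r b).trans (Nat.mod_eq_of_lt hr)

theorem dig_mul_pow_add_of_lt (a r : ℕ) {b j : ℕ} (hj : j < b) :
    dig L (a * L ^ b + r) j = dig L r j := by
  obtain ⟨k, rfl⟩ := Nat.exists_eq_add_of_lt hj
  have hpos : 0 < L ^ j := by positivity
  rw [dig_eq hL, dig_eq hL, show a * L ^ (j + k + 1) = L ^ j * (a * L ^ k * L) by ring,
    Nat.mul_add_div hpos, Nat.add_mod, Nat.mul_mod_left, zero_add, Nat.mod_mod]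

theorem dig_mul_pow_add_self {a r b : ℕ} (ha : a < L) (hr : r < L ^ b) :
    dig L (a * L ^ b + r) b = a := by
  rw [dig_eq hL, mul_comm, Nat.mul_add_div (by positivity), Nat.div_eq_of_lt hr, add_zero,
    Nat.mod_eq_of_lt ha]

theorem exm_mul_pow_add {a r b : ℕ} (ha : a < L) (hr : r < L ^ b) :
    exm L (a * L ^ b + r) =
      exm L r + (((L : ℤ) - 1) * a * b + (a - 1) * a) * (L : ℤ) ^ b + 2 * a * r := by
  have hm : a * L ^ b + r < L ^ (b + 1) := by
    calc a * L ^ b + r < (a + 1) * L ^ b := by linarith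
      _ ≤ L * L ^ b := Nat.mul_le_mul_right _ ha
      _ = L ^ (b + 1) := (pow_succ' L b).symm
  have hlow : ∀ j < b, dig L (a * L ^ b + r) j = dig L r j :=
    fun j hj => dig_mul_pow_add_of_lt hL a r hj
  rw [exm_eq_exSum hL hm, exSum_succ, dig_mul_pow_add_self hL ha hr, exSum_congr L hlow,
    ← exm_eq_exSum hL hr, sum_congr rfl fun j hj => by rw [hlow j (mem_range.1 hj)],
    sum_dig_mul_pow hL hr]
  ring

theorem exm_mul_pow {a : ℕ} (ha : a < L) (b : ℕ) :
    exm L (a * L ^ b) = (((L : ℤ) - 1) * a * b + (a - 1) * a) * (L : ℤ) ^ b := by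
  simpa [exm] using exm_mul_pow_add hL ha (r := 0) (b := b) (by positivity)

theorem xi_nonneg {N m : ℕ} (h : m < L ^ N) : 0 ≤ xi L N m := by
  induction N generalizing m with
  | zero => simp_all [xi, exm]
  | succ N ih =>
    have hP : 0 < L ^ N := by positivity
    set a := m / L ^ N
    set r := m % L ^ N
    have hm : m = a * L ^ N + r := (Nat.div_add_mod' m (L ^ N)).symm
    have ha : a < L := Nat.div_lt_of_lt_mul (by rwa [← pow_succ])
    have hr : r < L ^ N := Nat.mod_lt m hP
    have hxi : xi L (N + 1) m = xi L N r
        + ((L - 1 - 2 * a) * r + a * (L - a) * (L : ℤ) ^ N) := by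
      rw [xi, xi, hm, exm_mul_pow_add hL ha hr]
      push_cast
      ring
    have hrP : (r : ℤ) ≤ (L : ℤ) ^ N := by exact_mod_cast hr.le
    have haL : (a : ℤ) + 1 ≤ L := by exact_mod_cast ha
    -- the bracket is affine in `r`, nonnegative at `r = 0` and at `r = L ^ N`
    have hstep : 0 ≤ (L - 1 - 2 * a) * (r : ℤ) + a * (L - a) * (L : ℤ) ^ N := by
      nlinarith [mul_nonneg (sub_nonneg.2 hrP) (Nat.cast_nonneg (α := ℤ) a)]
    rw [hxi]
    exact add_nonneg (ih hr) hstep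

end digits

theorem stmt4_general (L n g t h0 : ℕ) (hL : 2 ≤ L) (hn : 2 ≤ n)
    (hg : g ≤ L - 1) (ht : t ≤ n - 2) (h0lt : h0 < L ^ t) :
    xi L n (g * L ^ t + h0) - xi L n (g * L ^ t)
        = ((L : ℤ) - 1) * (n : ℤ) * (h0 : ℤ) - 2 * (g : ℤ) * (h0 : ℤ) - exm L h0 ∧
      xi L (n - 2) h0
        ≤ ((L : ℤ) - 1) * (n : ℤ) * (h0 : ℤ) - 2 * (g : ℤ) * (h0 : ℤ) - exm L h0 ∧
      0 ≤ xi L (n - 2) h0 := by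
  have hgL : g < L := by omega
  have hdiff : xi L n (g * L ^ t + h0) - xi L n (g * L ^ t)
      = ((L : ℤ) - 1) * n * h0 - 2 * g * h0 - exm L h0 := by
    rw [xi, xi, exm_mul_pow_add hL hgL h0lt, exm_mul_pow hL hgL]
    push_cast
    ring
  have hgZ : (g : ℤ) ≤ L - 1 := by omega
  refine ⟨hdiff, ?_, xi_nonneg hL (h0lt.trans_le (Nat.pow_le_pow_right (by omega) ht))⟩
  rw [xi, Nat.cast_sub hn]
  push_cast
  nlinarith [mul_le_mul_of_nonneg_right hgZ (Nat.cast_nonneg (α := ℤ) h0)]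

theorem stmt4 (L n g t h0 : ℕ) (hL : 2 ≤ L) (hn : 2 ≤ n)
    (hg : g ≤ L - 1) (ht : t ≤ n - 2) (h0pos : 0 < h0) (h0lt : h0 < L ^ t) :
    xi L n (g * L ^ t + h0) - xi L n (g * L ^ t)
        = ((L : ℤ) - 1) * (n : ℤ) * (h0 : ℤ) - 2 * (g : ℤ) * (h0 : ℤ) - exm L h0 ∧
      xi L (n - 2) h0
        ≤ ((L : ℤ) - 1) * (n : ℤ) * (h0 : ℤ) - 2 * (g : ℤ) * (h0 : ℤ) - exm L h0 ∧
      0 ≤ xi L (n - 2) h0 :=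
  stmt4_general L n g t h0 hL hn hg ht h0lt
end

section
/- Let L ≥ 2, n ≥ 1 and 0 ≤ t ≤ n−1. The L^t-extra edge-connectivity of the Hamming graph K_L^n (the minimum size of an edge set F such that K_L^n − F is disconnected and every component has at least L^t vertices) equals (L−1)(n−t)L^t. -/
/-- The Hamming graph `K_L^n`: vertices are the strings in `{0,…,L-1}^n`, two vertices
being adjacent iff they differ in exactly one coordinate. -/
def hammingGraph (L n : ℕ) : SimpleGraph (Fin n → Fin L) where
  Adj u v := u ≠ v ∧ ∀ i j : Fin n, u i ≠ v i → u j ≠ v j → i = j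
  symm := ⟨fun _ _ ⟨h1, h2⟩ => ⟨h1.symm, fun i j hi hj => h2 i j hi.symm hj.symm⟩⟩
  loopless := ⟨fun _ ⟨h1, _⟩ => h1 rfl⟩

/-- The `h`-extra edge-connectivity of `K_L^n`: the minimum size of an edge set `F` such
that `K_L^n − F` is disconnected and every component has at least `h` vertices. -/
noncomputable def extraEC (L n h : ℕ) : ℕ :=
  sInf {k | ∃ F : Finset (Sym2 (Fin n → Fin L)),
    ↑F ⊆ (hammingGraph L n).edgeSet ∧
    ¬((hammingGraph L n).deleteEdges ↑F).Connected ∧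
    (∀ C : ((hammingGraph L n).deleteEdges ↑F).ConnectedComponent, h ≤ C.supp.ncard) ∧
    F.card = k}


/-!
Lower bound. Let `F` split `K_L^n` into components of at least `L^t` vertices, and let `S` be the
vertex set of one component; then `S` and its complement both have at least `L^t` vertices and
every edge leaving `S` lies in `F`. Han's inequality for the uniform distribution on `S`, together
with the concavity of `log` along each line (the `L` vertices differing from a given one in a fixed
coordinate), gives `|∂S| log L ≥ (L - 1) |S| (n log L - log |S|)`. Replacing `S` by its complement
we may assume `|S| ≤ L^n / 2`; the right-hand side is concave in `|S|`, equals
`(L - 1)(n - t) L^t log L` at `|S| = L^t` and is at least that at `|S| = L^n / 2`, unless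
`L^(n - t) = 3`. In that case (`L = 3`, `t = n - 1`) a line meeting `S` in `a` points contributes
`a (3 - a)` boundary edges, which is a fixed multiple of the entropy deficits of the line for `S`
and for its complement, and applying Han's inequality to both sides gives the bound `2 · 3^(n-1)`.

Upper bound. The edges leaving the subcube `{u | u i = 0 for i ≥ t}` form such a cut: the
subcube and its complement both stay connected, and there are `(L - 1)(n - t) L^t` of them.
-/

open Finset Real SimpleGraph

namespace HammingIsoperimetry

lemma sub_one_mul_log_le_sub_one_mul_log {a b : ℝ} (ha : 1 ≤ a) (hab : a ≤ b) :
    (a - 1) * log b ≤ (b - 1) * log a := by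
  rcases ha.eq_or_lt with rfl | ha
  · simp
  rcases hab.eq_or_lt with rfl | hab
  · rfl
  have h := strictConcaveOn_log_Ioi.concaveOn.neg.secant_mono_aux1 (Set.mem_Ioi.2 one_pos)
    (Set.mem_Ioi.2 (by linarith : (0 : ℝ) < b)) ha hab
  simp only [Pi.neg_apply, log_one, neg_zero, mul_zero, zero_add] at h
  linarith

lemma sq_le_two_pow_of_ne_three {m : ℕ} (hm : m ≠ 3) : m ^ 2 ≤ 2 ^ m := by
  rcases lt_or_ge m 4 with hm4 | hm4
  · interval_cases m <;> simp_all
  induction m, hm4 using Nat.le_induction with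
  | base => norm_num
  | succ m hm4 ih =>
    rw [pow_succ 2 m]
    nlinarith [ih (by omega)]

lemma min_le_mul_sub_log {K a b x : ℝ} (ha : 0 ≤ a) (hax : a ≤ x) (hxb : x ≤ b) :
    min (a * (K - log a)) (b * (K - log b)) ≤ x * (K - log x) := by
  have hconc := ((LinearMap.mulLeft ℝ K).concaveOn (convex_Ici 0)).add concaveOn_negMulLog
  have h := hconc.ge_on_segment (Set.mem_Ici.2 ha) (Set.mem_Ici.2 (ha.trans (hax.trans hxb)))
    (by rw [segment_eq_Icc (hax.trans hxb)]; exact ⟨hax, hxb⟩)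
  have hform : ∀ y, K * y + negMulLog y = y * (K - log y) := fun y => by rw [negMulLog]; ring
  simpa only [Pi.add_apply, LinearMap.mulLeft_apply, hform] using h

lemma sub_mul_pow_mul_log_le {q n t μ : ℕ} (hq : 2 ≤ q) (ht : t ≤ n) (h3 : q ^ (n - t) ≠ 3)
    (hμ : q ^ t ≤ μ) (hμ' : 2 * μ ≤ q ^ n) :
    ((n - t : ℕ) : ℝ) * q ^ t * log q ≤ μ * (n * log q - log μ) := by
  have hq0 : (0 : ℝ) < q := by positivity
  have hpow : (q : ℝ) ^ n = q ^ t * q ^ (n - t) := by rw [← pow_add, Nat.add_sub_cancel' ht]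
  have hcast : ((n - t : ℕ) : ℝ) = n - t := Nat.cast_sub ht
  have hleft : (q : ℝ) ^ t * (n * log q - log (q ^ t)) = ((n - t : ℕ) : ℝ) * q ^ t * log q := by
    rw [log_pow, hcast]; ring
  have hright : ((n - t : ℕ) : ℝ) * q ^ t * log q
      ≤ (q : ℝ) ^ n / 2 * (n * log q - log ((q : ℝ) ^ n / 2)) := by
    have hsq : log (((q : ℝ) ^ (n - t)) ^ 2) ≤ log ((2 : ℝ) ^ q ^ (n - t)) :=
      log_le_log (by positivity) (by exact_mod_cast sq_le_two_pow_of_ne_three h3)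
    rw [← pow_mul, log_pow, log_pow] at hsq
    rw [log_div (by positivity) two_ne_zero, log_pow, hpow]
    push_cast at hsq
    nlinarith [pow_pos hq0 t]
  calc ((n - t : ℕ) : ℝ) * q ^ t * log q
      ≤ min ((q : ℝ) ^ t * (n * log q - log (q ^ t)))
          ((q : ℝ) ^ n / 2 * (n * log q - log ((q : ℝ) ^ n / 2))) := le_min hleft.ge hright
    _ ≤ μ * (n * log q - log μ) := by
        have hμ'' : (μ : ℝ) ≤ q ^ n / 2 := by
          rw [le_div_iff₀ two_pos, mul_comm]; exact_mod_cast hμ'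
        exact min_le_mul_sub_log (by positivity) (by exact_mod_cast hμ) hμ''

lemma mul_log_add_mul_log_le {T A x : ℝ} (hA : 0 ≤ A) (h1 : A ≤ x) (h2 : x ≤ T - A) :
    x * log x + (T - x) * log (T - x) ≤ A * log A + (T - A) * log (T - A) := by
  set g : ℝ →ᵃ[ℝ] ℝ := AffineMap.const ℝ ℝ T - AffineMap.id ℝ ℝ
  have hg : ∀ y, g y = T - y := fun y => rfl
  have hrefl := convexOn_mul_log.comp_affineMap g
  rw [show g ⁻¹' Set.Ici 0 = Set.Iic T by ext; simp [hg]] at hrefl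
  have hφ := (convexOn_mul_log.subset Set.Icc_subset_Ici_self (convex_Icc 0 T)).add
    (hrefl.subset Set.Icc_subset_Iic_self (convex_Icc 0 T))
  have h := hφ.le_on_segment (x := A) (y := T - A) ⟨hA, by linarith⟩ ⟨by linarith, by linarith⟩
    (by rw [segment_eq_Icc (h1.trans h2)]; exact ⟨h1, h2⟩)
  simpa [hg, sub_sub_cancel, add_comm] using h

section Cube

variable {ι α : Type*} [Fintype ι] [DecidableEq ι]

def coordsOff (J : Finset ι) (x : ι → α) : ↥Jᶜ → α :=
  Jᶜ.restrict x

lemma coordsOff_eq_iff {J : Finset ι} {x y : ι → α} :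
    coordsOff J x = coordsOff J y ↔ ∀ j ∉ J, x j = y j := by
  simp [coordsOff, funext_iff]

lemma coordsOff_eq_of_subset {J J' : Finset ι} (h : J ⊆ J') {x y : ι → α}
    (hxy : coordsOff J x = coordsOff J y) : coordsOff J' x = coordsOff J' y := by
  rw [coordsOff_eq_iff] at hxy ⊢
  exact fun j hj => hxy j fun hjJ => hj (h hjJ)

variable [DecidableEq α]

def fiberCard (S : Finset (ι → α)) (J : Finset ι) (x : ι → α) : ℕ :=
  #{y ∈ S | coordsOff J y = coordsOff J x}

lemma fiberCard_pos {S : Finset (ι → α)} {J : Finset ι} {x : ι → α} (hx : x ∈ S) :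
    0 < fiberCard S J x :=
  card_pos.2 ⟨x, mem_filter.2 ⟨hx, rfl⟩⟩

lemma fiberCard_empty {S : Finset (ι → α)} {x : ι → α} (hx : x ∈ S) : fiberCard S ∅ x = 1 := by
  have : {y ∈ S | coordsOff ∅ y = coordsOff ∅ x} = {x} := by
    ext y
    simp only [mem_filter, coordsOff_eq_iff, notMem_empty, not_false_eq_true, forall_const,
      ← funext_iff, mem_singleton]
    exact ⟨And.right, fun h => ⟨h ▸ hx, h⟩⟩
  rw [fiberCard, this, card_singleton]

lemma fiberCard_univ (S : Finset (ι → α)) (x : ι → α) : fiberCard S univ x = #S := by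
  rw [fiberCard, filter_true_of_mem fun y _ =>
    coordsOff_eq_iff.2 fun j hj => absurd (mem_univ j) hj]

lemma fiberCard_univ_singleton [Fintype α] (i : ι) (x : ι → α) :
    fiberCard univ {i} x = Fintype.card α := by
  have : {y ∈ (univ : Finset (ι → α)) | coordsOff {i} y = coordsOff {i} x}
      = univ.image (Function.update x i) := by
    ext y
    simp only [mem_filter, mem_univ, true_and, coordsOff_eq_iff, mem_singleton, mem_image]
    constructor
    · intro h
      exact ⟨y i, funext fun j => by
        rcases eq_or_ne j i with rfl | hj
        · simp
        · simp [hj, h j hj]⟩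
    · rintro ⟨c, rfl⟩ j hj
      simp [hj]
  rw [fiberCard, this, card_image_of_injective _ (Function.update_injective x i), card_univ]

lemma fiberCard_compl_add_fiberCard [Fintype α] (S : Finset (ι → α)) (i : ι) (x : ι → α) :
    fiberCard Sᶜ {i} x + fiberCard S {i} x = Fintype.card α := by
  rw [← fiberCard_univ_singleton i x, fiberCard, fiberCard, fiberCard, ← card_union_of_disjoint
    (disjoint_filter_filter disjoint_compl_left), ← filter_union, union_comm, union_compl]

lemma fiberCard_singleton_le [Fintype α] (S : Finset (ι → α)) (i : ι) (x : ι → α) :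
    fiberCard S {i} x ≤ Fintype.card α :=
  (fiberCard_compl_add_fiberCard S i x) ▸ Nat.le_add_left _ _

lemma sum_fiberCard_mul_fiberCard_le_sq {S : Finset (ι → α)} {J : Finset ι} {i : ι} (hi : i ∉ J)
    (r : ↥(insert i J)ᶜ → α) :
    ∑ x ∈ S with coordsOff (insert i J) x = r, fiberCard S J x * fiberCard S {i} x
      ≤ #{x ∈ S | coordsOff (insert i J) x = r} ^ 2 := by
  set Φ := {x ∈ S | coordsOff (insert i J) x = r}
  have hΦ : ∀ x ∈ Φ, ∀ K ⊆ insert i J, ∀ y ∈ S, coordsOff K y = coordsOff K x → y ∈ Φ := by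
    intro x hx K hK y hy hyx
    rw [mem_filter] at hx ⊢
    exact ⟨hy, (coordsOff_eq_of_subset hK hyx).trans hx.2⟩
  calc ∑ x ∈ Φ, fiberCard S J x * fiberCard S {i} x
      = #(Φ.sigma fun x => {y ∈ S | coordsOff J y = coordsOff J x} ×ˢ
          {z ∈ S | coordsOff {i} z = coordsOff {i} x}) := by
        simp only [card_sigma, card_product, fiberCard]
    _ ≤ #(Φ ×ˢ Φ) := by
        refine card_le_card_of_injOn Sigma.snd ?_ ?_
        · rintro ⟨x, y, z⟩ hp
          simp only [coe_sigma, Set.mem_sigma_iff, mem_coe, mem_product, mem_filter] at hp ⊢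
          exact ⟨hΦ x hp.1 J (subset_insert i J) y hp.2.1.1 hp.2.1.2,
            hΦ x hp.1 {i} (singleton_subset_iff.2 (mem_insert_self i J)) z hp.2.2.1 hp.2.2.2⟩
        -- `x` is recovered from `y` off `J` and from `z` on `J`
        · rintro ⟨x, y, z⟩ hp ⟨x', y', z'⟩ hp' (h : (y, z) = (y', z'))
          obtain ⟨rfl, rfl⟩ := Prod.ext_iff.1 h
          simp only [coe_sigma, Set.mem_sigma_iff, mem_coe, mem_product, mem_filter,
            coordsOff_eq_iff, mem_singleton] at hp hp'
          obtain rfl : x = x' := funext fun j => by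
            by_cases hj : j ∈ J
            · have hji : j ≠ i := fun h => hi (h ▸ hj)
              rw [← hp.2.2.2 j hji, hp'.2.2.2 j hji]
            · rw [← hp.2.1.2 j hj, hp'.2.1.2 j hj]
          rfl
    _ = #Φ ^ 2 := by rw [card_product, sq]

lemma sum_fiberCard_mul_div_le {S : Finset (ι → α)} {J : Finset ι} {i : ι} (hi : i ∉ J) :
    ∑ x ∈ S, (fiberCard S J x * fiberCard S {i} x : ℝ) / fiberCard S (insert i J) x ≤ #S := by
  have hmaps : ∀ x ∈ S, coordsOff (insert i J) x ∈ S.image (coordsOff (insert i J)) :=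
    fun x hx => mem_image_of_mem _ hx
  rw [← sum_fiberwise_of_maps_to hmaps, card_eq_sum_card_fiberwise hmaps, Nat.cast_sum]
  refine sum_le_sum fun r _ => ?_
  set Φ := {x ∈ S | coordsOff (insert i J) x = r}
  have hfiber : ∀ x ∈ Φ, fiberCard S (insert i J) x = #Φ :=
    fun x hx => by rw [fiberCard, (mem_filter.1 hx).2]
  rcases Φ.eq_empty_or_nonempty with hempty | hne
  · simp [hempty]
  rw [sum_congr rfl fun x hx => by rw [hfiber x hx], ← sum_div, div_le_iff₀ (by positivity)]
  exact_mod_cast (sum_fiberCard_mul_fiberCard_le_sq hi r).trans_eq (sq _)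

-- Han's inequality `∑_{i ∈ J} H(Xᵢ | X_{-i}) ≤ H(X_J | X_{-J})` for `X` uniform on `S`.
lemma sum_sum_log_fiberCard_singleton_le (S : Finset (ι → α)) (J : Finset ι) :
    ∑ i ∈ J, ∑ x ∈ S, log (fiberCard S {i} x) ≤ ∑ x ∈ S, log (fiberCard S J x) := by
  induction J using Finset.induction_on with
  | empty =>
    rw [sum_empty, sum_eq_zero fun x hx => by rw [fiberCard_empty hx, Nat.cast_one, log_one]]
  | insert i J hi ih =>
    have hstep : ∑ x ∈ S, (log (fiberCard S {i} x) + log (fiberCard S J x)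
        - log (fiberCard S (insert i J) x)) ≤ 0 :=
      calc _ ≤ ∑ x ∈ S, ((fiberCard S J x * fiberCard S {i} x : ℝ) / fiberCard S (insert i J) x
              - 1) := by
            refine sum_le_sum fun x hx => ?_
            have hpos : ∀ K, (0 : ℝ) < fiberCard S K x := fun K => by
              exact_mod_cast fiberCard_pos hx
            rw [← log_mul (hpos _).ne' (hpos _).ne', ← log_div (mul_pos (hpos _) (hpos _)).ne'
              (hpos _).ne', mul_comm]
            exact log_le_sub_one_of_pos (div_pos (mul_pos (hpos _) (hpos _)) (hpos _))
        _ = ∑ x ∈ S, (fiberCard S J x * fiberCard S {i} x : ℝ) / fiberCard S (insert i J) x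
              - #S := by simp [sum_sub_distrib]
        _ ≤ 0 := sub_nonpos.2 (sum_fiberCard_mul_div_le hi)
    rw [sum_sub_distrib, sum_add_distrib] at hstep
    rw [sum_insert hi]
    linarith

lemma card_mul_log_sub_le_sum_log_sub [Fintype α] (S : Finset (ι → α)) :
    #S * (Fintype.card ι * log (Fintype.card α) - log #S)
      ≤ ∑ i, ∑ x ∈ S, (log (Fintype.card α) - log (fiberCard S {i} x)) := by
  have han := sum_sum_log_fiberCard_singleton_le S univ
  simp only [fiberCard_univ, sum_const, nsmul_eq_mul] at han
  simp only [sum_sub_distrib, sum_const, nsmul_eq_mul, card_univ]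
  linarith

lemma sum_fiberCard_comm (S T : Finset (ι → α)) (J : Finset ι) :
    ∑ x ∈ S, fiberCard T J x = ∑ y ∈ T, fiberCard S J y := by
  simp only [fiberCard, card_filter]
  rw [sum_comm]
  simp only [eq_comm]

variable [Fintype α]

-- the number of ordered pairs `(x, y)` with `x ∈ S`, `y ∉ S` and `x`, `y` on a common line
def boundaryCount (S : Finset (ι → α)) : ℕ :=
  ∑ i, ∑ x ∈ S, fiberCard Sᶜ {i} x

lemma boundaryCount_compl (S : Finset (ι → α)) : boundaryCount Sᶜ = boundaryCount S := by
  simp only [boundaryCount, compl_compl, sum_fiberCard_comm S Sᶜ]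

lemma cast_boundaryCount (S : Finset (ι → α)) :
    (boundaryCount S : ℝ) = ∑ i, ∑ x ∈ S, ((Fintype.card α : ℝ) - fiberCard S {i} x) := by
  simp only [boundaryCount, Nat.cast_sum]
  refine sum_congr rfl fun i _ => sum_congr rfl fun x _ => ?_
  rw [← fiberCard_compl_add_fiberCard S i x, Nat.cast_add, add_sub_cancel_right]

theorem sub_one_mul_card_mul_log_le_boundaryCount [Nonempty α] (S : Finset (ι → α)) :
    ((Fintype.card α : ℝ) - 1) * (#S * (Fintype.card ι * log (Fintype.card α) - log #S))
      ≤ boundaryCount S * log (Fintype.card α) := by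
  have hq : (1 : ℝ) ≤ Fintype.card α := by exact_mod_cast Fintype.card_pos
  calc _ ≤ ((Fintype.card α : ℝ) - 1) *
        ∑ i, ∑ x ∈ S, (log (Fintype.card α) - log (fiberCard S {i} x)) :=
        mul_le_mul_of_nonneg_left (card_mul_log_sub_le_sum_log_sub S) (by linarith)
    _ ≤ ∑ i, ∑ x ∈ S, ((Fintype.card α : ℝ) - fiberCard S {i} x) * log (Fintype.card α) := by
        simp only [mul_sum]
        refine sum_le_sum fun i _ => sum_le_sum fun x hx => ?_
        have hchord := sub_one_mul_log_le_sub_one_mul_log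
          (by exact_mod_cast fiberCard_pos hx : (1 : ℝ) ≤ fiberCard S {i} x)
          (by exact_mod_cast fiberCard_singleton_le S i x :
            (fiberCard S {i} x : ℝ) ≤ Fintype.card α)
        linarith
    _ = boundaryCount S * log (Fintype.card α) := by
        simp only [cast_boundaryCount, sum_mul]

lemma sum_add_sum_compl_eq_zero (S : Finset (ι → α)) (i : ι) {g h : ℕ → ℝ}
    (hgh : ∀ a b : ℕ, b + a = Fintype.card α → a * g a + b * h b = 0) :
    ∑ x ∈ S, g (fiberCard S {i} x) + ∑ x ∈ Sᶜ, h (fiberCard Sᶜ {i} x) = 0 := by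
  have hmaps : ∀ x : ι → α, coordsOff {i} x ∈ univ.image (coordsOff {i}) :=
    fun x => mem_image_of_mem _ (mem_univ x)
  have hlines : ∀ (T : Finset (ι → α)) (f : ℕ → ℝ), ∑ x ∈ T, f (fiberCard T {i} x) =
      ∑ r ∈ univ.image (coordsOff {i}),
        #{x ∈ T | coordsOff {i} x = r} * f #{x ∈ T | coordsOff {i} x = r} := by
    intro T f
    rw [← sum_fiberwise_of_maps_to fun x _ => hmaps x]
    refine sum_congr rfl fun r _ => ?_
    rw [← nsmul_eq_mul, ← sum_const]
    exact sum_congr rfl fun x hx => by rw [fiberCard, (mem_filter.1 hx).2]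
  rw [hlines S g, hlines Sᶜ h, ← sum_add_distrib]
  refine sum_eq_zero fun r hr => ?_
  obtain ⟨x, -, rfl⟩ := mem_image.1 hr
  exact hgh _ _ (fiberCard_compl_add_fiberCard S i x)

lemma mul_boundaryCount_eq_of_card_eq_three (hα : Fintype.card α = 3) (S : Finset (ι → α)) :
    (3 * log 3 - 2 * log 2) * boundaryCount S
      = 2 * (∑ i, ∑ x ∈ S, (log 3 - log (fiberCard S {i} x))
        + ∑ i, ∑ x ∈ Sᶜ, (log 3 - log (fiberCard Sᶜ {i} x))) := by
  -- A line meeting `S` in `a` points contributes `a (3 - a)` to the left-hand side; the constant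
  -- `3 log 3 - 2 log 2` makes the contributions of the line to both sides agree for every `a ≤ 3`.
  have hline : ∀ i, ∑ x ∈ S, ((3 * log 3 - 2 * log 2) * (3 - fiberCard S {i} x)
        - 2 * (log 3 - log (fiberCard S {i} x)))
      + ∑ x ∈ Sᶜ, -(2 * (log 3 - log (fiberCard Sᶜ {i} x))) = 0 := by
    refine fun i => sum_add_sum_compl_eq_zero S i
      (g := fun a => (3 * log 3 - 2 * log 2) * (3 - a) - 2 * (log 3 - log a))
      (h := fun b => -(2 * (log 3 - log b))) fun a b hab => ?_
    rw [hα] at hab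
    obtain rfl : b = 3 - a := by omega
    have ha : a ≤ 3 := by omega
    interval_cases a <;> norm_num <;> ring
  have hsum := sum_eq_zero fun i (_ : i ∈ univ) => hline i
  rw [cast_boundaryCount, hα, Nat.cast_ofNat]
  simp only [sum_add_distrib, sum_sub_distrib, ← mul_sum, sum_neg_distrib] at hsum ⊢
  linarith

theorem two_mul_three_pow_le_boundaryCount {t : ℕ} (hα : Fintype.card α = 3)
    (hι : Fintype.card ι = t + 1) {S : Finset (ι → α)} (h1 : 3 ^ t ≤ #S) (h2 : 3 ^ t ≤ #Sᶜ) :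
    2 * 3 ^ t ≤ boundaryCount S := by
  set A : ℝ := 3 ^ t
  have hK : 0 < 3 * log 3 - 2 * log 2 := by
    have := log_lt_log two_pos (by norm_num : (2 : ℝ) < 3)
    linarith [log_pos (by norm_num : (1 : ℝ) < 2)]
  have hcard : (#S : ℝ) + #Sᶜ = 3 * A := by
    rw [← pow_succ', ← Nat.cast_ofNat, ← Nat.cast_pow, ← hα, ← hι, ← Fintype.card_fun,
      ← Nat.cast_add, card_add_card_compl]
  have hhanS := card_mul_log_sub_le_sum_log_sub S
  have hhanSc := card_mul_log_sub_le_sum_log_sub Sᶜ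
  rw [hα, hι, Nat.cast_ofNat] at hhanS hhanSc
  have hA1 : A ≤ #S := by simp only [A]; exact_mod_cast h1
  have hA2 : A ≤ #Sᶜ := by simp only [A]; exact_mod_cast h2
  have hpair := mul_log_add_mul_log_le (T := 3 * A) (A := A) (x := #S) (by positivity) hA1
    (by linarith)
  rw [← hcard, add_sub_cancel_left, hcard, (by ring : 3 * A - A = 2 * A)] at hpair
  have hlogA : log A = t * log 3 := log_pow _ _
  have hlog2A : log (2 * A) = log 2 + t * log 3 := by
    rw [log_mul two_ne_zero (by positivity), hlogA]
  rw [hlogA, hlog2A] at hpair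
  have hexp : (#S : ℝ) * ((t + 1 : ℕ) * log 3 - log #S) + #Sᶜ * ((t + 1 : ℕ) * log 3 - log #Sᶜ)
      = 3 * A * ((t + 1 : ℕ) * log 3) - (#S * log #S + #Sᶜ * log #Sᶜ) := by
    rw [← hcard]; ring
  have hkey : 2 * A * (3 * log 3 - 2 * log 2) ≤ (3 * log 3 - 2 * log 2) * boundaryCount S := by
    rw [mul_boundaryCount_eq_of_card_eq_three hα]
    push_cast at hexp hhanS hhanSc
    linarith
  have : (2 * 3 ^ t : ℝ) ≤ boundaryCount S := le_of_mul_le_mul_left (by linarith) hK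
  exact_mod_cast this

lemma le_boundaryCount_of_two_mul_card_le {t : ℕ} (hα : 2 ≤ Fintype.card α)
    (ht : t ≤ Fintype.card ι) (h3 : Fintype.card α ^ (Fintype.card ι - t) ≠ 3)
    {S : Finset (ι → α)} (h1 : Fintype.card α ^ t ≤ #S)
    (hhalf : 2 * #S ≤ Fintype.card α ^ Fintype.card ι) :
    (Fintype.card α - 1) * (Fintype.card ι - t) * Fintype.card α ^ t ≤ boundaryCount S := by
  have : Nonempty α := Fintype.card_pos_iff.1 (by omega)
  have hq : (2 : ℝ) ≤ Fintype.card α := by exact_mod_cast hα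
  have hlog : 0 < log (Fintype.card α) := log_pos (by linarith)
  have hnum := sub_mul_pow_mul_log_le hα ht h3 h1 hhalf
  have hreal : ((Fintype.card α : ℝ) - 1) * ((Fintype.card ι - t : ℕ) * Fintype.card α ^ t)
      ≤ boundaryCount S := by
    refine le_of_mul_le_mul_right ?_ hlog
    calc _ = ((Fintype.card α : ℝ) - 1) *
          ((Fintype.card ι - t : ℕ) * Fintype.card α ^ t * log (Fintype.card α)) := by ring
      _ ≤ _ := mul_le_mul_of_nonneg_left hnum (by linarith)
      _ ≤ _ := sub_one_mul_card_mul_log_le_boundaryCount S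
  rw [← Nat.cast_le (α := ℝ)]
  push_cast [Nat.one_le_of_lt hα] at hreal ⊢
  linarith

lemma eq_three_of_pow_eq_three {q k : ℕ} (hq : 2 ≤ q) (hk : 1 ≤ k) (h : q ^ k = 3) :
    q = 3 ∧ k = 1 := by
  obtain ⟨k, rfl⟩ := Nat.exists_eq_add_of_le' hk
  rcases k with _ | k
  · simpa using h
  · have : 2 ^ 2 ≤ q ^ (k + 1 + 1) :=
      (Nat.pow_le_pow_left hq 2).trans (Nat.pow_le_pow_right (by omega) (by omega))
    omega

theorem le_boundaryCount {t : ℕ} (hα : 2 ≤ Fintype.card α) (ht : t < Fintype.card ι)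
    {S : Finset (ι → α)} (h1 : Fintype.card α ^ t ≤ #S) (h2 : Fintype.card α ^ t ≤ #Sᶜ) :
    (Fintype.card α - 1) * (Fintype.card ι - t) * Fintype.card α ^ t ≤ boundaryCount S := by
  by_cases h3 : Fintype.card α ^ (Fintype.card ι - t) = 3
  · obtain ⟨hα3, hι⟩ := eq_three_of_pow_eq_three hα (by omega) h3
    rw [hα3] at h1 h2 ⊢
    rw [hι]
    exact two_mul_three_pow_le_boundaryCount hα3 (by omega) h1 h2
  wlog hhalf : 2 * #S ≤ Fintype.card α ^ Fintype.card ι generalizing S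
  · have hcard := card_add_card_compl S
    rw [Fintype.card_fun] at hcard
    rw [← boundaryCount_compl]
    exact this h2 (by rwa [compl_compl]) (by omega)
  exact le_boundaryCount_of_two_mul_card_le hα ht.le h3 h1 hhalf

def subcube (I : Finset ι) (a : α) : Finset (ι → α) :=
  {u | ∀ i ∈ I, u i = a}

lemma mem_subcube {I : Finset ι} {a : α} {u : ι → α} : u ∈ subcube I a ↔ ∀ i ∈ I, u i = a := by
  simp [subcube]

lemma card_subcube (I : Finset ι) (a : α) : #(subcube I a) = Fintype.card α ^ #Iᶜ := by
  have : subcube I a = Fintype.piFinset fun i => if i ∈ I then {a} else univ := by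
    ext u
    simp only [mem_subcube, Fintype.mem_piFinset]
    refine forall_congr' fun i => ?_
    split_ifs <;> simp_all
  rw [this, Fintype.card_piFinset]
  simp only [apply_ite card, card_singleton, card_univ]
  rw [prod_ite, prod_const_one, one_mul, prod_const, filter_not, filter_mem_eq_inter, univ_inter,
    compl_eq_univ_sdiff]

lemma fiberCard_subcube {I : Finset ι} {a : α} {x : ι → α} (hx : x ∈ subcube I a) (i : ι) :
    fiberCard (subcube I a) {i} x = if i ∈ I then 1 else Fintype.card α := by
  rw [mem_subcube] at hx
  split_ifs with hi
  · rw [fiberCard, card_eq_one]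
    refine ⟨x, ext fun y => ?_⟩
    simp only [mem_filter, mem_subcube, coordsOff_eq_iff, mem_singleton]
    constructor
    · rintro ⟨hy, hyx⟩
      funext j
      rcases eq_or_ne j i with rfl | hj
      · rw [hy j hi, hx j hi]
      · exact hyx j hj
    · rintro rfl
      exact ⟨hx, fun _ _ => rfl⟩
  · rw [← fiberCard_univ_singleton i x, fiberCard, fiberCard]
    congr 1
    ext y
    simp only [mem_filter, mem_subcube, mem_univ, true_and, coordsOff_eq_iff, mem_singleton,
      and_iff_right_iff_imp]
    exact fun hyx j hj => (hyx j fun h => hi (h ▸ hj)).trans (hx j hj)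

lemma boundaryCount_subcube (I : Finset ι) (a : α) :
    boundaryCount (subcube I a) = (Fintype.card α - 1) * #I * Fintype.card α ^ #Iᶜ := by
  have hfiber : ∀ i, ∀ x ∈ subcube I a,
      fiberCard (subcube I a)ᶜ {i} x = if i ∈ I then Fintype.card α - 1 else 0 := by
    intro i x hx
    have := fiberCard_compl_add_fiberCard (subcube I a) i x
    rw [fiberCard_subcube hx] at this
    split_ifs at this ⊢ <;> omega
  rw [boundaryCount, sum_congr rfl fun i _ => sum_congr rfl (hfiber i)]
  simp only [sum_const, card_subcube, smul_ite, smul_zero, sum_ite_mem, univ_inter]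
  ring

end Cube

section EdgeBoundary

variable {V : Type*} [Fintype V] [DecidableEq V] (G : SimpleGraph V) [DecidableRel G.Adj]

def edgeBoundary (S : Finset V) : Finset (Sym2 V) :=
  {p ∈ S ×ˢ Sᶜ | G.Adj p.1 p.2}.image fun p => s(p.1, p.2)

variable {G}

lemma card_edgeBoundary (S : Finset V) :
    #(edgeBoundary G S) = #{p ∈ S ×ˢ Sᶜ | G.Adj p.1 p.2} := by
  refine card_image_of_injOn fun p hp p' hp' h => ?_
  simp only [coe_filter, mem_product, mem_compl, Set.mem_ofPred_eq] at hp hp'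
  rcases Sym2.mk_eq_mk_iff.1 h with h | rfl
  · exact h
  · exact (hp'.1.2 hp.1.1).elim

lemma edgeBoundary_subset_edgeSet (S : Finset V) : ↑(edgeBoundary G S) ⊆ G.edgeSet := by
  intro e he
  obtain ⟨p, hp, rfl⟩ := mem_image.1 he
  exact (mem_filter.1 hp).2

lemma edgeBoundary_subset_of_forall_adj {F : Set (Sym2 V)} {S : Finset V}
    (hS : ∀ x ∈ S, ∀ y, (G.deleteEdges F).Adj x y → y ∈ S) : ↑(edgeBoundary G S) ⊆ F := by
  intro e he
  obtain ⟨⟨x, y⟩, hp, rfl⟩ := mem_image.1 he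
  simp only [mem_filter, mem_product, mem_compl] at hp
  by_contra hxy
  exact hp.1.2 (hS x hp.1.1 y (deleteEdges_adj.2 ⟨hp.2, hxy⟩))

lemma mem_edgeBoundary {S : Finset V} {u v : V} :
    s(u, v) ∈ edgeBoundary G S ↔ G.Adj u v ∧ (u ∈ S ∧ v ∉ S ∨ v ∈ S ∧ u ∉ S) := by
  simp only [edgeBoundary, mem_image, mem_filter, mem_product, mem_compl, Prod.exists,
    Sym2.eq_iff]
  constructor
  · rintro ⟨a, b, ⟨hab, hadj⟩, ⟨rfl, rfl⟩ | ⟨rfl, rfl⟩⟩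
    exacts [⟨hadj, .inl hab⟩, ⟨hadj.symm, .inr hab⟩]
  · rintro ⟨hadj, h | h⟩
    exacts [⟨u, v, ⟨h, hadj⟩, .inl ⟨rfl, rfl⟩⟩, ⟨v, u, ⟨h, hadj.symm⟩, .inr ⟨rfl, rfl⟩⟩]

lemma deleteEdges_edgeBoundary_adj {S : Finset V} {u v : V} :
    (G.deleteEdges ↑(edgeBoundary G S)).Adj u v ↔ G.Adj u v ∧ (u ∈ S ↔ v ∈ S) := by
  rw [deleteEdges_adj, mem_coe, mem_edgeBoundary]
  tauto

lemma mem_iff_of_reachable_deleteEdges_edgeBoundary {S : Finset V} {u v : V}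
    (h : (G.deleteEdges ↑(edgeBoundary G S)).Reachable u v) : u ∈ S ↔ v ∈ S := by
  obtain ⟨w⟩ := h
  induction w with
  | nil => rfl
  | cons hadj _ ih => exact (deleteEdges_edgeBoundary_adj.1 hadj).2.trans ih

end EdgeBoundary

lemma reachable_const_of_forall_update {ι α : Type*} [Fintype ι] [DecidableEq ι] [DecidableEq α]
    {G : SimpleGraph (ι → α)} (P : (ι → α) → Prop) (c : α)
    (hP : ∀ u i, P u → u i ≠ c → P (Function.update u i c) ∧ G.Adj u (Function.update u i c))
    {u : ι → α} (hu : P u) : G.Reachable u fun _ => c := by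
  induction hd : #{i | u i ≠ c} generalizing u with
  | zero =>
    obtain rfl : u = fun _ => c := funext fun i => by
      by_contra hi
      exact (card_pos.2 ⟨i, mem_filter.2 ⟨mem_univ i, hi⟩⟩).ne' hd
    rfl
  | succ d ih =>
    obtain ⟨i, hi⟩ : ∃ i, u i ≠ c := by
      by_contra! h
      simp [h] at hd
    obtain ⟨hPu, hadj⟩ := hP u i hu hi
    refine hadj.reachable.trans (ih hPu ?_)
    have : ({j | Function.update u i c j ≠ c} : Finset ι) = ({j | u j ≠ c} : Finset ι).erase i := by
      ext j
      rcases eq_or_ne j i with rfl | hj <;> simp [*]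
    rw [this, card_erase_of_mem (mem_filter.2 ⟨mem_univ i, hi⟩), hd, Nat.add_sub_cancel]

instance (L n : ℕ) : DecidableRel (hammingGraph L n).Adj := fun u v =>
  inferInstanceAs (Decidable (u ≠ v ∧ ∀ i j : Fin n, u i ≠ v i → u j ≠ v j → i = j))

variable {L n : ℕ}

lemma hammingGraph_adj_iff {u v : Fin n → Fin L} :
    (hammingGraph L n).Adj u v ↔ u ≠ v ∧ ∃ i, coordsOff {i} u = coordsOff {i} v := by
  simp only [coordsOff_eq_iff, mem_singleton]
  refine and_congr_right fun hne => ⟨fun h => ?_, fun ⟨i, hi⟩ j k hj hk => ?_⟩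
  · obtain ⟨i, hi⟩ := Function.ne_iff.1 hne
    exact ⟨i, fun j hj => by_contra fun hne' => hj (h j i hne' hi)⟩
  · rw [by_contra fun h => hj (hi j h), by_contra fun h => hk (hi k h)]

lemma hammingGraph_adj_update {u : Fin n → Fin L} {i : Fin n} {c : Fin L} (h : u i ≠ c) :
    (hammingGraph L n).Adj u (Function.update u i c) := by
  refine hammingGraph_adj_iff.2 ⟨fun he => h (by rw [he, Function.update_self]), i, ?_⟩
  rw [coordsOff_eq_iff]
  intro j hj
  rw [Function.update_of_ne (by simpa using hj)]

lemma card_edgeBoundary_hammingGraph (S : Finset (Fin n → Fin L)) :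
    #(edgeBoundary (hammingGraph L n) S) = boundaryCount S := by
  rw [card_edgeBoundary, card_filter, sum_product, boundaryCount, sum_comm (s := univ)]
  refine sum_congr rfl fun x hx => ?_
  have hnbhd : {y ∈ Sᶜ | (hammingGraph L n).Adj x y}
      = univ.biUnion fun i => {y ∈ Sᶜ | coordsOff {i} y = coordsOff {i} x} := by
    ext y
    simp only [mem_filter, mem_biUnion, mem_univ, true_and, hammingGraph_adj_iff, mem_compl]
    exact ⟨fun ⟨hy, _, i, hi⟩ => ⟨i, hy, hi.symm⟩,
      fun ⟨i, hy, hi⟩ => ⟨hy, fun h => hy (h ▸ hx), i, hi.symm⟩⟩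
  rw [← card_filter, hnbhd, card_biUnion]
  · rfl
  · intro i _ j _ hij
    refine disjoint_left.2 fun y hyi hyj => ?_
    rw [mem_filter, coordsOff_eq_iff] at hyi hyj
    have hyx : y = x := funext fun k => by
      rcases eq_or_ne k i with rfl | hki
      · exact hyj.2 k (by simpa using hij)
      · exact hyi.2 k (by simpa using hki)
    exact mem_compl.1 hyi.1 (hyx ▸ hx)

section SubcubeCut

variable {I : Finset (Fin n)} {a : Fin L}

lemma reachable_const_of_mem_subcube {u : Fin n → Fin L} (hu : u ∈ subcube I a) :
    ((hammingGraph L n).deleteEdges ↑(edgeBoundary (hammingGraph L n) (subcube I a))).Reachable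
      u fun _ => a := by
  refine reachable_const_of_forall_update (· ∈ subcube I a) a (fun u i hu hi => ?_) hu
  have hu' : Function.update u i a ∈ subcube I a := mem_subcube.2 fun j hj => by
    rcases eq_or_ne j i with rfl | hji
    · exact Function.update_self ..
    · rw [Function.update_of_ne hji]; exact mem_subcube.1 hu j hj
  exact ⟨hu', deleteEdges_edgeBoundary_adj.2 ⟨hammingGraph_adj_update hi, iff_of_true hu hu'⟩⟩

lemma reachable_const_of_notMem_subcube {b : Fin L} (hb : b ≠ a) {u : Fin n → Fin L}
    (hu : u ∉ subcube I a) :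
    ((hammingGraph L n).deleteEdges ↑(edgeBoundary (hammingGraph L n) (subcube I a))).Reachable
      u fun _ => b := by
  refine reachable_const_of_forall_update (· ∉ subcube I a) b (fun u i hu hi => ?_) hu
  have hu' : Function.update u i b ∉ subcube I a := by
    obtain ⟨j, hj, hua⟩ : ∃ j ∈ I, u j ≠ a := by simpa [mem_subcube] using hu
    refine fun h => ?_
    rcases eq_or_ne j i with rfl | hji
    · exact hb (by simpa using mem_subcube.1 h j hj)
    · exact hua (by simpa [hji] using mem_subcube.1 h j hj)
  exact ⟨hu', deleteEdges_edgeBoundary_adj.2 ⟨hammingGraph_adj_update hi, iff_of_false hu hu'⟩⟩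

lemma subcube_subset_supp_or_compl_subset_supp (hL : 2 ≤ L)
    (C : ConnectedComponent
      ((hammingGraph L n).deleteEdges ↑(edgeBoundary (hammingGraph L n) (subcube I a)))) :
    ↑(subcube I a) ⊆ C.supp ∨ ↑(subcube I a)ᶜ ⊆ C.supp := by
  have : Nontrivial (Fin L) := Fin.nontrivial_iff_two_le.2 hL
  obtain ⟨b, hb⟩ := exists_ne a
  obtain ⟨v, rfl⟩ := C.exists_rep
  by_cases hv : v ∈ subcube I a
  · refine .inl fun w hw => ConnectedComponent.sound ?_
    exact (reachable_const_of_mem_subcube hw).trans (reachable_const_of_mem_subcube hv).symm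
  · refine .inr fun w hw => ConnectedComponent.sound ?_
    have hw : w ∉ subcube I a := by simpa using hw
    exact (reachable_const_of_notMem_subcube hb hw).trans
      (reachable_const_of_notMem_subcube hb hv).symm

lemma not_connected_deleteEdges_edgeBoundary_subcube (hL : 2 ≤ L) (hI : I.Nonempty) :
    ¬((hammingGraph L n).deleteEdges
      ↑(edgeBoundary (hammingGraph L n) (subcube I a))).Connected := by
  have : Nontrivial (Fin L) := Fin.nontrivial_iff_two_le.2 hL
  obtain ⟨b, hb⟩ := exists_ne a
  obtain ⟨i, hi⟩ := hI
  intro hconn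
  have hab := mem_iff_of_reachable_deleteEdges_edgeBoundary
    (hconn.preconnected (fun _ => a) fun _ => b)
  exact hb (mem_subcube.1 (hab.1 (mem_subcube.2 fun _ _ => rfl)) i hi)

end SubcubeCut

theorem le_card_of_not_connected {t : ℕ} (hL : 2 ≤ L) (ht : t < n)
    {F : Finset (Sym2 (Fin n → Fin L))} (hncon : ¬((hammingGraph L n).deleteEdges ↑F).Connected)
    (hcomp : ∀ C : ((hammingGraph L n).deleteEdges ↑F).ConnectedComponent, L ^ t ≤ C.supp.ncard) :
    (L - 1) * (n - t) * L ^ t ≤ #F := by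
  classical
  set G' := (hammingGraph L n).deleteEdges ↑F
  have : Nonempty (Fin n → Fin L) := ⟨fun _ => ⟨0, by omega⟩⟩
  obtain ⟨u, v, huv⟩ : ∃ u v, ¬G'.Reachable u v := by
    by_contra! h
    exact hncon ⟨h⟩
  set S := (G'.connectedComponentMk u).supp.toFinset
  have h1 : L ^ t ≤ #S := by rw [← Set.ncard_eq_toFinset_card']; exact hcomp _
  have h2 : L ^ t ≤ #Sᶜ := by
    refine (hcomp (G'.connectedComponentMk v)).trans ?_
    rw [Set.ncard_eq_toFinset_card']
    refine card_le_card fun w hw => mem_compl.2 fun hwS => huv ?_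
    simp only [S, Set.mem_toFinset, ConnectedComponent.mem_supp_iff] at hw hwS
    exact ConnectedComponent.exact (hwS.symm.trans hw)
  have hcut : (edgeBoundary (hammingGraph L n) S : Set (Sym2 (Fin n → Fin L))) ⊆ ↑F := by
    refine edgeBoundary_subset_of_forall_adj fun x hx y hxy => ?_
    simp only [S, Set.mem_toFinset, ConnectedComponent.mem_supp_iff] at hx ⊢
    exact (ConnectedComponent.connectedComponentMk_eq_of_adj hxy).symm.trans hx
  calc (L - 1) * (n - t) * L ^ t ≤ boundaryCount S := by
        simpa only [Fintype.card_fin] using le_boundaryCount (ι := Fin n) (α := Fin L)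
          (by simpa) (by simpa) (by simpa using h1) (by simpa using h2)
    _ = #(edgeBoundary (hammingGraph L n) S) := (card_edgeBoundary_hammingGraph S).symm
    _ ≤ #F := card_le_card (coe_subset.1 hcut)

theorem exists_extra_cut {t : ℕ} (hL : 2 ≤ L) (ht : t < n) :
    ∃ F : Finset (Sym2 (Fin n → Fin L)), ↑F ⊆ (hammingGraph L n).edgeSet ∧
      ¬((hammingGraph L n).deleteEdges ↑F).Connected ∧
      (∀ C : ((hammingGraph L n).deleteEdges ↑F).ConnectedComponent, L ^ t ≤ C.supp.ncard) ∧
      #F = (L - 1) * (n - t) * L ^ t := by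
  set I : Finset (Fin n) := {i | t ≤ (i : ℕ)}
  have hIc : #Iᶜ = t := by
    simp only [I, compl_filter, not_le, Fin.card_filter_val_lt]
    omega
  have hI : #I = n - t := by
    have := card_le_univ I
    rw [card_compl, Fintype.card_fin] at hIc
    rw [Fintype.card_fin] at this
    omega
  set W := subcube I (⟨0, by omega⟩ : Fin L)
  have hW : #W = L ^ t := by rw [card_subcube, hIc, Fintype.card_fin]
  have hWc : L ^ t ≤ #Wᶜ := by
    rw [card_compl, hW, Fintype.card_fun, Fintype.card_fin, Fintype.card_fin]
    have h1 := Nat.pow_le_pow_right (by omega : 0 < L) ht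
    have h2 : L ^ t * 2 ≤ L ^ t * L := Nat.mul_le_mul_left _ hL
    rw [pow_succ] at h1
    omega
  refine ⟨edgeBoundary (hammingGraph L n) W, edgeBoundary_subset_edgeSet W,
    not_connected_deleteEdges_edgeBoundary_subcube hL ⟨⟨t, ht⟩, by simp [I]⟩, fun C => ?_, ?_⟩
  · rcases subcube_subset_supp_or_compl_subset_supp hL C with h | h
    · exact hW ▸ (Set.ncard_coe_finset W).symm.trans_le (Set.ncard_le_ncard h)
    · exact hWc.trans ((Set.ncard_coe_finset Wᶜ).symm.trans_le
        (Set.ncard_le_ncard (by simpa using h)))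
  · rw [card_edgeBoundary_hammingGraph, boundaryCount_subcube, hI, hIc, Fintype.card_fin]

end HammingIsoperimetry

open HammingIsoperimetry

theorem stmt9 (L n t : ℕ) (hL : 2 ≤ L) (hn : 1 ≤ n) (ht : t ≤ n - 1) :
    extraEC L n (L ^ t) = (L - 1) * (n - t) * L ^ t := by
  have htn : t < n := by omega
  refine le_antisymm (Nat.sInf_le (exists_extra_cut hL htn)) ?_
  refine le_csInf ⟨_, exists_extra_cut hL htn⟩ ?_
  rintro k ⟨F, -, hncon, hcomp, rfl⟩
  exact le_card_of_not_connected hL htn hncon hcomp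
end

section
/- Let L ≥ 2, n ≥ 1 and 0 ≤ t ≤ n−1. The t-embedded edge-connectivity of K_L^n — the minimum size of an edge cut F such that every component of K_L^n − F contains an L-ary t-dimensional sub-layer of K_L^n — equals (L−1)(n−t)L^t. -/
/-- An `L`-ary `t`-dimensional sub-layer of `K_L^n`: the set of vertices obtained by fixing
some `n - t` coordinates. -/
def IsSubLayer (L n t : ℕ) (X : Set (Fin n → Fin L)) : Prop :=
  ∃ (S : Finset (Fin n)) (z : Fin n → Fin L),
    S.card = n - t ∧ X = {v | ∀ i ∈ S, v i = z i}

/-- The `t`-embedded edge-connectivity of `K_L^n`: the minimum size of an edge cut `F` such that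
every component of `K_L^n − F` contains an `L`-ary `t`-dimensional sub-layer. -/
noncomputable def embEC (L n t : ℕ) : ℕ :=
  sInf {k | ∃ F : Finset (Sym2 (Fin n → Fin L)),
    ↑F ⊆ (hammingGraph L n).edgeSet ∧
    ¬((hammingGraph L n).deleteEdges ↑F).Connected ∧
    (∀ C : ((hammingGraph L n).deleteEdges ↑F).ConnectedComponent,
      ∃ X, IsSubLayer L n t X ∧ X ⊆ C.supp) ∧
    F.card = k}

open Finset Function

def Splits {α : Type*} (A : Set α) (Q : Finset α) : Prop :=
  (∃ a ∈ Q, a ∈ A) ∧ ∃ b ∈ Q, b ∉ A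

section Splits

variable {α : Type*} {A : Set α} {Q : Finset α} {a v : α}

theorem mem_of_not_splits (h : ¬Splits A Q) (ha : a ∈ Q) (haA : a ∈ A) (hv : v ∈ Q) : v ∈ A :=
  by_contra fun hvA => h ⟨⟨a, ha, haA⟩, v, hv, hvA⟩

theorem notMem_of_not_splits (h : ¬Splits A Q) (ha : a ∈ Q) (haA : a ∉ A) (hv : v ∈ Q) :
    v ∉ A :=
  fun hvA => h ⟨⟨v, hv, hvA⟩, a, ha, haA⟩

end Splits

namespace SimpleGraph

variable {V : Type*} (G : SimpleGraph V)

open Classical in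
noncomputable def crossingPairs (A : Set V) (Q : Finset V) : Finset (V × V) :=
  {p ∈ Q ×ˢ Q | G.Adj p.1 p.2 ∧ p.1 ∈ A ∧ p.2 ∉ A}

variable {G}

theorem mem_crossingPairs {A : Set V} {Q : Finset V} {p : V × V} :
    p ∈ G.crossingPairs A Q ↔ p.1 ∈ Q ∧ p.2 ∈ Q ∧ G.Adj p.1 p.2 ∧ p.1 ∈ A ∧ p.2 ∉ A := by
  simp [crossingPairs, and_assoc]

theorem crossingPairs_mono {A : Set V} {Q R : Finset V} (h : Q ⊆ R) :
    G.crossingPairs A Q ⊆ G.crossingPairs A R := by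
  intro p hp
  rw [mem_crossingPairs] at hp ⊢
  exact ⟨h hp.1, h hp.2.1, hp.2.2⟩

theorem sum_card_crossingPairs_le {ι : Type*} {A : Set V} {Q : Finset V} {s : Finset ι}
    {P : ι → Finset V} (hPQ : ∀ i ∈ s, P i ⊆ Q) (hP : (s : Set ι).PairwiseDisjoint P) :
    ∑ i ∈ s, #(G.crossingPairs A (P i)) ≤ #(G.crossingPairs A Q) := by
  classical
  rw [← card_biUnion]
  · exact card_le_card (biUnion_subset.2 fun i hi => crossingPairs_mono (hPQ i hi))
  · intro i hi j hj hij
    exact Finset.disjoint_left.2 fun p hpi hpj =>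
      Finset.disjoint_left.1 (hP hi hj hij) (mem_crossingPairs.1 hpi).1 (mem_crossingPairs.1 hpj).1

theorem card_crossingPairs_le_card {A : Set V} {Q : Finset V} {F : Finset (Sym2 V)}
    (hF : ∀ u v, G.Adj u v → u ∈ A → v ∉ A → s(u, v) ∈ F) :
    #(G.crossingPairs A Q) ≤ #F := by
  refine card_le_card_of_injOn (fun p => s(p.1, p.2)) (fun p hp => ?_) fun p hp q hq hpq => ?_
  · obtain ⟨-, -, hadj, hA, hA'⟩ := mem_crossingPairs.1 hp
    exact hF _ _ hadj hA hA'
  · rcases Sym2.mk_eq_mk_iff.1 hpq with h | h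
    · exact h
    · have h₁ : p.1 = q.2 := congrArg Prod.fst h
      exact absurd (h₁ ▸ (mem_crossingPairs.1 hp).2.2.2.1) (mem_crossingPairs.1 hq).2.2.2.2

theorem ConnectedComponent.mk_mem_of_adj_of_mem_supp {F : Set (Sym2 V)}
    (C : (G.deleteEdges F).ConnectedComponent) {u v : V} (h : G.Adj u v) (hu : u ∈ C.supp)
    (hv : v ∉ C.supp) : s(u, v) ∈ F :=
  by_contra fun hF => hv ((C.mem_supp_congr_adj (deleteEdges_adj.2 ⟨h, hF⟩)).1 hu)

variable [Fintype V]

variable (G) in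
open Classical in
noncomputable def edgeCut (A : Set V) : Finset (Sym2 V) :=
  (G.crossingPairs A univ).image fun p => s(p.1, p.2)

theorem edgeCut_subset_edgeSet (A : Set V) : ↑(G.edgeCut A) ⊆ G.edgeSet := by
  classical
  intro e he
  obtain ⟨p, hp, rfl⟩ := mem_image.1 (mem_coe.1 he)
  exact (mem_crossingPairs.1 hp).2.2.1

theorem card_edgeCut_le (A : Set V) : #(G.edgeCut A) ≤ #(G.crossingPairs A univ) := by
  classical
  exact card_image_le

theorem mk_mem_edgeCut_iff {A : Set V} {u v : V} (h : G.Adj u v) :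
    s(u, v) ∈ G.edgeCut A ↔ ¬(u ∈ A ↔ v ∈ A) := by
  classical
  simp only [edgeCut, mem_image, mem_crossingPairs, mem_univ, true_and]
  constructor
  · rintro ⟨⟨a, b⟩, ⟨-, ha, hb⟩, hab⟩
    rcases Sym2.eq_iff.1 hab with ⟨rfl, rfl⟩ | ⟨rfl, rfl⟩ <;> tauto
  · intro huv
    by_cases hu : u ∈ A
    · exact ⟨(u, v), ⟨h, hu, fun hv => huv (iff_of_true hu hv)⟩, rfl⟩
    · exact ⟨(v, u), ⟨h.symm, by tauto, hu⟩, Sym2.eq_swap⟩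

theorem deleteEdges_edgeCut_adj {A : Set V} {u v : V} :
    (G.deleteEdges (G.edgeCut A)).Adj u v ↔ G.Adj u v ∧ (u ∈ A ↔ v ∈ A) := by
  rw [deleteEdges_adj, and_congr_right_iff]
  intro h
  rw [mem_coe, mk_mem_edgeCut_iff h, not_not]

theorem not_reachable_deleteEdges_edgeCut {A : Set V} {u v : V} (hu : u ∈ A) (hv : v ∉ A) :
    ¬(G.deleteEdges (G.edgeCut A)).Reachable u v := by
  rintro ⟨p⟩
  obtain ⟨d, -, hd, hd'⟩ := p.exists_boundary_dart A hu hv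
  exact hd' ((deleteEdges_edgeCut_adj.1 d.adj).2.1 hd)

end SimpleGraph

namespace hammingGraph

variable {L n : ℕ}

theorem adj_update (v : Fin n → Fin L) {i : Fin n} {c : Fin L} (h : v i ≠ c) :
    (hammingGraph L n).Adj v (update v i c) := by
  have key : ∀ k, v k ≠ update v i c k → k = i := fun k hk =>
    by_contra fun hki => hk (update_of_ne hki c v).symm
  exact ⟨fun he => h (by simpa using congrFun he i),
    fun k l hk hl => (key k hk).trans (key l hl).symm⟩

theorem exists_eq_update_of_adj {u v : Fin n → Fin L} (h : (hammingGraph L n).Adj u v) :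
    ∃ i, u i ≠ v i ∧ v = update u i (v i) := by
  obtain ⟨hne, huniq⟩ := h
  obtain ⟨i, hi⟩ := Function.ne_iff.1 hne
  refine ⟨i, hi, funext fun k => ?_⟩
  by_cases hki : k = i
  · subst hki
    simp
  · rw [update_of_ne hki]
    by_contra hk
    exact hki (huniq k i (Ne.symm hk) hi)

/-- `W` is the set of free coordinates, so a `t`-dimensional sub-layer is `subcube z Sᶜ` with
`#S = n - t`. -/
def subcube (x : Fin n → Fin L) (W : Finset (Fin n)) : Finset (Fin n → Fin L) :=
  Fintype.piFinset fun i => if i ∈ W then univ else {x i}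

variable {x y u v : Fin n → Fin L} {U W : Finset (Fin n)}

theorem mem_subcube : v ∈ subcube x W ↔ ∀ i ∉ W, v i = x i := by
  simp only [subcube, Fintype.mem_piFinset]
  refine forall_congr' fun i => ?_
  split_ifs with hi <;> simp [hi]

theorem mem_subcube_compl {S : Finset (Fin n)} : v ∈ subcube x Sᶜ ↔ ∀ i ∈ S, v i = x i := by
  simp [mem_subcube]

theorem card_subcube (x : Fin n → Fin L) (W : Finset (Fin n)) : #(subcube x W) = L ^ #W := by
  simp [subcube, apply_ite card, prod_ite_mem]

theorem self_mem_subcube (x : Fin n → Fin L) (W : Finset (Fin n)) : x ∈ subcube x W :=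
  mem_subcube.2 fun _ _ => rfl

theorem subcube_univ (x : Fin n → Fin L) : subcube x univ = univ := by
  ext v
  simp [mem_subcube]

theorem subcube_subset_subcube (hy : y ∈ subcube x U) (hWU : W ⊆ U) :
    subcube y W ⊆ subcube x U := by
  intro v hv
  rw [mem_subcube] at hv hy ⊢
  exact fun i hi => (hv i fun hiW => hi (hWU hiW)).trans (hy i hi)

theorem update_mem_subcube (hv : v ∈ subcube x W) {i : Fin n} {c : Fin L} (h : i ∉ W → c = x i) :
    update v i c ∈ subcube x W := by
  rw [mem_subcube] at hv ⊢
  intro k hk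
  rcases eq_or_ne k i with rfl | hki
  · simpa using h hk
  · rw [update_of_ne hki]
    exact hv k hk

theorem update_eq_of_mem_subcube_singleton {j : Fin n} (hv : v ∈ subcube x {j}) :
    update x j (v j) = v := by
  funext i
  rcases eq_or_ne i j with rfl | hij
  · simp
  · rw [update_of_ne hij]
    exact (mem_subcube.1 hv i (by simpa using hij)).symm

theorem exists_mem_subcube_inter (h : ∀ i ∉ U, i ∉ W → x i = y i) :
    ∃ v ∈ subcube x U, v ∈ subcube y W := by
  refine ⟨fun i => if i ∈ U then y i else x i, mem_subcube.2 fun i hi => by simp [hi],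
    mem_subcube.2 fun i hi => ?_⟩
  by_cases hiU : i ∈ U
  · simp [hiU]
  · simp [hiU, h i hiU hi]

theorem disjoint_subcube (hy : y ∈ subcube x (U \ W)) (hu : u ∈ subcube x (U \ W)) (hne : y ≠ u) :
    Disjoint (subcube y W) (subcube u W) := by
  obtain ⟨i, hi⟩ := Function.ne_iff.1 hne
  have hiW : i ∉ W := fun hiW => hi <| by
    have hiUW : i ∉ U \ W := fun h => (mem_sdiff.1 h).2 hiW
    rw [mem_subcube.1 hy i hiUW, mem_subcube.1 hu i hiUW]
  exact Finset.disjoint_left.2 fun v hvy hvu =>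
    hi ((mem_subcube.1 hvy i hiW).symm.trans (mem_subcube.1 hvu i hiW))

variable {A : Set (Fin n → Fin L)}

theorem le_card_crossingPairs_of_forall_subcube {k : ℕ} (hWU : W ⊆ U)
    (h : ∀ y ∈ subcube x U, k ≤ #((hammingGraph L n).crossingPairs A (subcube y W))) :
    L ^ #(U \ W) * k ≤ #((hammingGraph L n).crossingPairs A (subcube x U)) := by
  have hreps : subcube x (U \ W) ⊆ subcube x U :=
    subcube_subset_subcube (self_mem_subcube x U) sdiff_subset
  calc L ^ #(U \ W) * k = ∑ _y ∈ subcube x (U \ W), k := by simp [card_subcube]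
    _ ≤ ∑ y ∈ subcube x (U \ W), #((hammingGraph L n).crossingPairs A (subcube y W)) :=
      sum_le_sum fun y hy => h y (hreps hy)
    _ ≤ _ := SimpleGraph.sum_card_crossingPairs_le
      (fun y hy => subcube_subset_subcube (hreps hy) hWU)
      fun y hy u hu hne => disjoint_subcube hy hu hne

theorem le_card_crossingPairs_line {j : Fin n} (h : Splits A (subcube x {j})) :
    L - 1 ≤ #((hammingGraph L n).crossingPairs A (subcube x {j})) := by
  classical
  obtain ⟨⟨a, ha, haA⟩, b, hb, hbA⟩ := h
  set s : Finset (Fin L) := {c | update x j c ∈ A}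
  have hs : 0 < #s := card_pos.2 ⟨a j, by simpa [s, update_eq_of_mem_subcube_singleton ha]⟩
  have hsc : 0 < #sᶜ := card_pos.2 ⟨b j, by simpa [s, update_eq_of_mem_subcube_singleton hb]⟩
  have hsum : #s + #sᶜ = L := by rw [card_add_card_compl, Fintype.card_fin]
  have hline : ∀ c, update x j c ∈ subcube x {j} := fun c =>
    update_mem_subcube (self_mem_subcube x {j}) fun h => absurd (mem_singleton_self j) h
  calc L - 1 ≤ #s * #sᶜ := Nat.sub_le_iff_le_add.2 (by nlinarith)
    _ = #(s ×ˢ sᶜ) := (card_product s sᶜ).symm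
    _ ≤ _ := by
      refine card_le_card_of_injOn (fun c => (update x j c.1, update x j c.2))
        (fun c hc => ?_) fun c _ d _ hcd => ?_
      · simp only [coe_product, Set.mem_prod, mem_coe, mem_compl, mem_filter, mem_univ,
          true_and, s] at hc
        refine SimpleGraph.mem_crossingPairs.2 ⟨hline _, hline _, ?_, hc.1, hc.2⟩
        have hne : c.1 ≠ c.2 := fun h => hc.2 (h ▸ hc.1)
        simpa using adj_update (update x j c.1) (i := j) (by simpa using hne)
      · simp only [Prod.mk.injEq] at hcd
        exact Prod.ext (by simpa using congrFun hcd.1 j) (by simpa using congrFun hcd.2 j)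

theorem nonempty_of_splits_subcube (h : Splits A (subcube x W)) : W.Nonempty := by
  obtain ⟨⟨a, ha, haA⟩, b, hb, hbA⟩ := h
  rw [nonempty_iff_ne_empty]
  rintro rfl
  have hx : ∀ v ∈ subcube x ∅, v = x := fun v hv =>
    funext fun i => mem_subcube.1 hv i (notMem_empty i)
  exact hbA (hx b hb ▸ hx a ha ▸ haA)

theorem card_crossingPairs_slice_add_line_le {j : Fin n} (hj : j ∉ W)
    (hy : y ∈ subcube x (insert j W)) (hu : u ∈ subcube x (insert j W)) :
    #((hammingGraph L n).crossingPairs A (subcube y W)) +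
        #((hammingGraph L n).crossingPairs A (subcube u {j})) ≤
      #((hammingGraph L n).crossingPairs A (subcube x (insert j W))) := by
  have hdisj : Disjoint ((hammingGraph L n).crossingPairs A (subcube y W))
      ((hammingGraph L n).crossingPairs A (subcube u {j})) := by
    refine Finset.disjoint_left.2 fun p hp hp' => ?_
    obtain ⟨hp1, hp2, hadj, -⟩ := SimpleGraph.mem_crossingPairs.1 hp
    obtain ⟨hp1', hp2', -⟩ := SimpleGraph.mem_crossingPairs.1 hp'
    refine hadj.ne ?_
    rw [← update_eq_of_mem_subcube_singleton hp1', ← update_eq_of_mem_subcube_singleton hp2',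
      mem_subcube.1 hp1 j hj, mem_subcube.1 hp2 j hj]
  rw [← card_union_of_disjoint hdisj]
  exact card_le_card <| union_subset
    (SimpleGraph.crossingPairs_mono (subcube_subset_subcube hy (subset_insert j W)))
    (SimpleGraph.crossingPairs_mono
      (subcube_subset_subcube hu (singleton_subset_iff.2 (mem_insert_self j W))))

theorem le_card_crossingPairs_of_forall_line {j : Fin n} (hj : j ∉ W)
    (h : ∀ y ∈ subcube x (insert j W), Splits A (subcube y {j})) :
    (L - 1) * (#W + 1) ≤ #((hammingGraph L n).crossingPairs A (subcube x (insert j W))) := by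
  have hW : insert j W \ {j} = W := by rw [sdiff_singleton_eq_erase, erase_insert hj]
  calc (L - 1) * (#W + 1) ≤ L ^ #W * (L - 1) := by
        rcases lt_or_ge 1 L with hL | hL
        · rw [mul_comm]
          gcongr
          exact Nat.lt_pow_self hL
        · simp [Nat.sub_eq_zero_of_le hL]
    _ = L ^ #(insert j W \ {j}) * (L - 1) := by rw [hW]
    _ ≤ _ := le_card_crossingPairs_of_forall_subcube
      (singleton_subset_iff.2 (mem_insert_self j W)) fun y hy => le_card_crossingPairs_line (h y hy)

theorem le_card_crossingPairs_of_forall_slice {j : Fin n} (hj : j ∉ W) (hW : 0 < #W)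
    (h : ∀ y ∈ subcube x (insert j W),
      (L - 1) * #W ≤ #((hammingGraph L n).crossingPairs A (subcube y W))) :
    (L - 1) * (#W + 1) ≤ #((hammingGraph L n).crossingPairs A (subcube x (insert j W))) := by
  have hj' : #(insert j W \ W) = 1 := by simp [insert_sdiff_of_notMem _ hj]
  calc (L - 1) * (#W + 1) ≤ L ^ 1 * ((L - 1) * #W) := by
        rcases lt_or_ge 1 L with hL | hL
        · rw [pow_one, ← mul_assoc, mul_comm L, mul_assoc]
          gcongr
          nlinarith
        · simp [Nat.sub_eq_zero_of_le hL]
    _ = L ^ #(insert j W \ W) * ((L - 1) * #W) := by rw [hj']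
    _ ≤ _ := le_card_crossingPairs_of_forall_subcube (subset_insert j W) h

/-- Induction on `W = insert j W'`, cutting `subcube x W` into slices `subcube y W'` and lines
`subcube y {j}`: every line meets every slice, so either all slices are split, or all lines are,
or some slice and some line are. -/
theorem le_card_crossingPairs_subcube (W : Finset (Fin n)) (h : Splits A (subcube x W)) :
    (L - 1) * #W ≤ #((hammingGraph L n).crossingPairs A (subcube x W)) := by
  induction W using Finset.induction_on generalizing x with
  | empty => simp
  | @insert j W hj ih =>
    obtain ⟨⟨a, ha, haA⟩, b, hb, hbA⟩ := h
    have hmeet : ∀ y ∈ subcube x (insert j W), ∀ y' ∈ subcube x (insert j W),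
        ∃ v ∈ subcube y W, v ∈ subcube y' {j} := fun y hy y' hy' =>
      exists_mem_subcube_inter fun i hiW hij => by
        have hi : i ∉ insert j W := by simp_all
        rw [mem_subcube.1 hy i hi, mem_subcube.1 hy' i hi]
    rw [card_insert_of_notMem hj]
    by_cases hlines : ∃ y ∈ subcube x (insert j W), Splits A (subcube y {j})
    · by_cases hslices : ∃ y ∈ subcube x (insert j W), Splits A (subcube y W)
      · obtain ⟨y, hy, hyA⟩ := hslices
        obtain ⟨y', hy', hy'A⟩ := hlines
        calc (L - 1) * (#W + 1) = (L - 1) * #W + (L - 1) := by ring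
          _ ≤ _ := add_le_add (ih hyA) (le_card_crossingPairs_line hy'A)
          _ ≤ _ := card_crossingPairs_slice_add_line_le hj hy hy'
      · push Not at hslices
        refine le_card_crossingPairs_of_forall_line hj fun y hy => ?_
        obtain ⟨c, hca, hcy⟩ := hmeet a ha y hy
        obtain ⟨d, hdb, hdy⟩ := hmeet b hb y hy
        exact ⟨⟨c, hcy, mem_of_not_splits (hslices a ha) (self_mem_subcube a W) haA hca⟩,
          d, hdy, notMem_of_not_splits (hslices b hb) (self_mem_subcube b W) hbA hdb⟩
    · push Not at hlines
      have hall : ∀ y ∈ subcube x (insert j W), Splits A (subcube y W) := by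
        intro y hy
        obtain ⟨c, hcy, hca⟩ := hmeet y hy a ha
        obtain ⟨d, hdy, hdb⟩ := hmeet y hy b hb
        exact ⟨⟨c, hcy, mem_of_not_splits (hlines a ha) (self_mem_subcube a {j}) haA hca⟩,
          d, hdy, notMem_of_not_splits (hlines b hb) (self_mem_subcube b {j}) hbA hdb⟩
      exact le_card_crossingPairs_of_forall_slice hj
        (card_pos.2 (nonempty_of_splits_subcube (hall a ha))) fun y hy => ih (hall y hy)

/-- Inside `subcube y (S ∪ S')`, if no `S`-fiber is split then one of them lies in `A`, and it
meets every `S'`-fiber, which are then all split. -/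
theorem le_card_crossingPairs_subcube_union {S S' : Finset (Fin n)} (hSS' : #S = #S')
    (hA : ∀ v, ∃ a ∈ subcube v S, a ∈ A) (hA' : ∀ v, ∃ b ∈ subcube v S', b ∉ A)
    (y : Fin n → Fin L) :
    L ^ #((S ∪ S') \ S) * ((L - 1) * #S) ≤
      #((hammingGraph L n).crossingPairs A (subcube y (S ∪ S'))) := by
  by_cases hsplit : ∀ v ∈ subcube y (S ∪ S'), Splits A (subcube v S)
  · exact le_card_crossingPairs_of_forall_subcube subset_union_left fun v hv =>
      le_card_crossingPairs_subcube S (hsplit v hv)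
  · push Not at hsplit
    obtain ⟨v, hv, hvA⟩ := hsplit
    obtain ⟨a, ha, haA⟩ := hA v
    have hall : ∀ v' ∈ subcube y (S ∪ S'), Splits A (subcube v' S') := by
      intro v' hv'
      obtain ⟨c, hcv, hcv'⟩ := exists_mem_subcube_inter (U := S) (W := S') (x := v) (y := v')
        fun i hiS hiS' => by
          have hi : i ∉ S ∪ S' := by simp_all
          rw [mem_subcube.1 hv i hi, mem_subcube.1 hv' i hi]
      exact ⟨⟨c, hcv', mem_of_not_splits hvA ha haA hcv⟩, hA' v'⟩
    have hcard : #((S ∪ S') \ S') = #((S ∪ S') \ S) := by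
      rw [card_sdiff_of_subset subset_union_left, card_sdiff_of_subset subset_union_right, hSS']
    rw [← hcard, hSS']
    exact le_card_crossingPairs_of_forall_subcube subset_union_right fun v' hv' =>
      le_card_crossingPairs_subcube S' (hall v' hv')

theorem le_card_crossingPairs_univ {S S' : Finset (Fin n)} {z z' : Fin n → Fin L}
    (hSS' : #S = #S') (hz : ∀ v ∈ subcube z Sᶜ, v ∈ A) (hz' : ∀ v ∈ subcube z' S'ᶜ, v ∉ A) :
    L ^ #Sᶜ * ((L - 1) * #S) ≤ #((hammingGraph L n).crossingPairs A univ) := by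
  have hmeet : ∀ (S : Finset (Fin n)) (v z : Fin n → Fin L), ∃ a ∈ subcube v S, a ∈ subcube z Sᶜ :=
    fun S v z => exists_mem_subcube_inter fun i hi hi' => absurd (mem_compl.2 hi) hi'
  have hexp : #(univ \ (S ∪ S')) + #((S ∪ S') \ S) = #Sᶜ := by
    rw [card_sdiff_of_subset (subset_univ _), card_sdiff_of_subset subset_union_left, card_compl,
      card_univ]
    have := card_le_univ (S ∪ S')
    have := card_le_card (subset_union_left : S ⊆ S ∪ S')
    omega
  calc L ^ #Sᶜ * ((L - 1) * #S)
      = L ^ #(univ \ (S ∪ S')) * (L ^ #((S ∪ S') \ S) * ((L - 1) * #S)) := by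
        rw [← hexp, pow_add, mul_assoc]
    _ ≤ #((hammingGraph L n).crossingPairs A (subcube z univ)) :=
      le_card_crossingPairs_of_forall_subcube (subset_univ _) fun y _ =>
        le_card_crossingPairs_subcube_union hSS'
          (fun v => (hmeet S v z).imp fun a ha => ⟨ha.1, hz a ha.2⟩)
          (fun v => (hmeet S' v z').imp fun b hb => ⟨hb.1, hz' b hb.2⟩) y
    _ = #((hammingGraph L n).crossingPairs A univ) := by rw [subcube_univ]

theorem reachable_of_mem_subcube {H : SimpleGraph (Fin n → Fin L)} (W : Finset (Fin n))
    (hH : ∀ a ∈ subcube x W, ∀ b ∈ subcube x W, (hammingGraph L n).Adj a b → H.Adj a b)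
    (hu : u ∈ subcube x W) : H.Reachable x u := by
  induction W using Finset.induction_on generalizing x with
  | empty =>
    obtain rfl : u = x := funext fun i => mem_subcube.1 hu i (notMem_empty i)
    rfl
  | @insert j W hj ih =>
    set x' := update x j (u j)
    have hx' : x' ∈ subcube x (insert j W) :=
      update_mem_subcube (self_mem_subcube x _) fun h => absurd (mem_insert_self j W) h
    have hxx' : H.Reachable x x' := by
      by_cases hxu : x j = u j
      · simp [x', ← hxu]
      · exact (hH x (self_mem_subcube x _) x' hx' (adj_update x hxu)).reachable
    have hu' : u ∈ subcube x' W := mem_subcube.2 fun i hi => by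
      rcases eq_or_ne i j with rfl | hij
      · simp [x']
      · simp only [x', update_of_ne hij]
        exact mem_subcube.1 hu i (by simp [hi, hij])
    have hsub : subcube x' W ⊆ subcube x (insert j W) :=
      subcube_subset_subcube hx' (subset_insert j W)
    exact hxx'.trans (ih (fun a ha b hb => hH a (hsub ha) b (hsub hb)) hu')

theorem card_crossingPairs_subcube_le (x : Fin n → Fin L) (W : Finset (Fin n)) :
    #((hammingGraph L n).crossingPairs ↑(subcube x W) univ) ≤ L ^ #W * (#Wᶜ * (L - 1)) := by
  classical
  calc _ ≤ #((subcube x W).biUnion fun u => Wᶜ.biUnion fun i =>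
          (univ.erase (x i)).image fun c => (u, update u i c)) := card_le_card ?_
    _ ≤ #(subcube x W) * (#Wᶜ * (L - 1)) :=
      card_biUnion_le_card_mul _ _ _ fun u _ => card_biUnion_le_card_mul _ _ _ fun i _ =>
        card_image_le.trans (by simp)
    _ = _ := by rw [card_subcube]
  intro p hp
  obtain ⟨-, -, hadj, hp1, hp2⟩ := SimpleGraph.mem_crossingPairs.1 hp
  rw [mem_coe] at hp1 hp2
  obtain ⟨i, -, hi⟩ := exists_eq_update_of_adj hadj
  have hiW : i ∉ W ∧ p.2 i ≠ x i := by
    by_contra h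
    exact hp2 (hi ▸ update_mem_subcube hp1 fun hiW => by tauto)
  simp only [mem_biUnion, mem_image, mem_erase, mem_compl]
  exact ⟨p.1, hp1, i, hiW.1, p.2 i, ⟨hiW.2, mem_univ _⟩, by rw [← hi]⟩

theorem le_card_of_forall_subLayer_subset_supp {t : ℕ} (hL : 0 < L) (htn : t ≤ n)
    {F : Finset (Sym2 (Fin n → Fin L))} (hF : ¬((hammingGraph L n).deleteEdges ↑F).Connected)
    (hcomp : ∀ C : ((hammingGraph L n).deleteEdges ↑F).ConnectedComponent,
      ∃ X, IsSubLayer L n t X ∧ X ⊆ C.supp) :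
    (L - 1) * (n - t) * L ^ t ≤ #F := by
  have : Nonempty (Fin n → Fin L) := ⟨fun _ => ⟨0, hL⟩⟩
  obtain ⟨u, v, huv⟩ : ∃ u v, ¬((hammingGraph L n).deleteEdges ↑F).Reachable u v := by
    have hpre : ¬((hammingGraph L n).deleteEdges ↑F).Preconnected := fun h => hF ⟨h⟩
    simpa [SimpleGraph.Preconnected] using hpre
  set C := ((hammingGraph L n).deleteEdges ↑F).connectedComponentMk u
  obtain ⟨_, ⟨S, z, hS, rfl⟩, hzC⟩ := hcomp C
  obtain ⟨_, ⟨S', z', hS', rfl⟩, hz'C⟩ :=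
    hcomp (((hammingGraph L n).deleteEdges ↑F).connectedComponentMk v)
  have hz : ∀ w ∈ subcube z Sᶜ, w ∈ C.supp := fun w hw => hzC (mem_subcube_compl.1 hw)
  have hz' : ∀ w ∈ subcube z' S'ᶜ, w ∉ C.supp := fun w hw hwC =>
    huv <| SimpleGraph.ConnectedComponent.exact <|
      ((C.mem_supp_iff w).1 hwC).symm.trans (hz'C (mem_subcube_compl.1 hw))
  have hSc : #Sᶜ = t := by
    rw [card_compl, Fintype.card_fin, hS]
    omega
  calc (L - 1) * (n - t) * L ^ t = L ^ #Sᶜ * ((L - 1) * #S) := by rw [hSc, hS]; ring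
    _ ≤ #((hammingGraph L n).crossingPairs C.supp univ) :=
      le_card_crossingPairs_univ (hS.trans hS'.symm) hz hz'
    _ ≤ #F := SimpleGraph.card_crossingPairs_le_card fun a b hab ha hb =>
      C.mk_mem_of_adj_of_mem_supp hab ha hb

theorem exists_cut_forall_subLayer_subset_supp {t : ℕ} (hL : 2 ≤ L) (htn : t < n) :
    ∃ F : Finset (Sym2 (Fin n → Fin L)), ↑F ⊆ (hammingGraph L n).edgeSet ∧
      ¬((hammingGraph L n).deleteEdges ↑F).Connected ∧
      (∀ C : ((hammingGraph L n).deleteEdges ↑F).ConnectedComponent,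
        ∃ X, IsSubLayer L n t X ∧ X ⊆ C.supp) ∧
      #F ≤ (L - 1) * (n - t) * L ^ t := by
  obtain ⟨S, -, hS⟩ := exists_subset_card_eq (show n - t ≤ #(univ : Finset (Fin n)) by simp)
  obtain ⟨i, hi⟩ : S.Nonempty := card_pos.1 (by omega)
  set x : Fin n → Fin L := fun _ => ⟨0, by omega⟩
  set X : Set (Fin n → Fin L) := ↑(subcube x Sᶜ)
  have hpar : ∀ v, ∀ a ∈ subcube v Sᶜ, ∀ b ∈ subcube v Sᶜ, (hammingGraph L n).Adj a b →
      ((hammingGraph L n).deleteEdges ((hammingGraph L n).edgeCut X)).Adj a b := by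
    intro v a ha b hb hab
    rw [mem_subcube_compl] at ha hb
    refine SimpleGraph.deleteEdges_edgeCut_adj.2 ⟨hab, ?_⟩
    simp only [X, mem_coe, mem_subcube_compl]
    exact forall₂_congr fun k hk => by rw [ha k hk, hb k hk]
  refine ⟨(hammingGraph L n).edgeCut X, SimpleGraph.edgeCut_subset_edgeSet X,
    fun hconn => ?_, fun C => ?_, ?_⟩
  · have hw : update x i ⟨1, hL⟩ ∉ X := fun hw => by
      simpa [x] using mem_subcube_compl.1 hw i hi
    exact SimpleGraph.not_reachable_deleteEdges_edgeCut (self_mem_subcube x Sᶜ) hw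
      (hconn.preconnected _ _)
  · obtain ⟨v, rfl⟩ := C.exists_rep
    refine ⟨↑(subcube v Sᶜ), ⟨S, v, hS, by ext; exact mem_subcube_compl⟩, fun u hu => ?_⟩
    exact (SimpleGraph.ConnectedComponent.mem_supp_iff _ _).2
      (SimpleGraph.ConnectedComponent.sound (reachable_of_mem_subcube _ (hpar v) hu).symm)
  · have hSc : #Sᶜ = t := by
      rw [card_compl, Fintype.card_fin, hS]
      omega
    calc #((hammingGraph L n).edgeCut X) ≤ #((hammingGraph L n).crossingPairs X univ) :=
          SimpleGraph.card_edgeCut_le X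
      _ ≤ L ^ #Sᶜ * (#Sᶜᶜ * (L - 1)) := card_crossingPairs_subcube_le x Sᶜ
      _ = (L - 1) * (n - t) * L ^ t := by rw [compl_compl, hSc, hS]; ring

end hammingGraph

theorem stmt10 (L n t : ℕ) (hL : 2 ≤ L) (hn : 1 ≤ n) (ht : t ≤ n - 1) :
    embEC L n t = (L - 1) * (n - t) * L ^ t := by
  obtain ⟨F, hFE, hF, hcomp, hcard⟩ :=
    hammingGraph.exists_cut_forall_subLayer_subset_supp (n := n) (t := t) hL (by omega)
  unfold embEC
  apply le_antisymm
  · exact le_trans (Nat.sInf_le ⟨F, hFE, hF, hcomp, rfl⟩) hcard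
  · refine le_csInf ?_ ?_
    · exact ⟨_, F, hFE, hF, hcomp, rfl⟩
    rintro k ⟨F', -, hF', hcomp', rfl⟩
    exact hammingGraph.le_card_of_forall_subLayer_subset_supp (by omega) (by omega) hF' hcomp'
end

section
/- Let L ≥ 2, n ≥ 2, 0 ≤ t ≤ n−1 and 1 ≤ g ≤ L−1. In the Hamming graph K_L^n, let X be the union of the g sub-layers 0...0f X_t...X_1 for f = 0,...,g−1 (all strings whose coordinates above position t+1 are 0 and whose (t+1)-th coordinate is at most g−1). Then |X| = gL^t, both K_L^n[X] and K_L^n[complement of X] are connected, and the edge boundary satisfies |[X, X̄]| = g[(L−1)(n−t) − (g−1)]L^t. -/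
/-- The edge boundary `[X, X̄]` of a vertex set `X` in `G`: edges with one end in `X`
and the other end outside `X`. -/
def edgeBoundary {V : Type*} (G : SimpleGraph V) (X : Set V) : Set (Sym2 V) :=
  {e | e ∈ G.edgeSet ∧ ∃ u v, e = s(u, v) ∧ u ∈ X ∧ v ∉ X}

/-!
`X` is a box, and every vertex of it walks to `0…0` inside `X` by zeroing one coordinate at a
time. A vertex outside `X` walks to the constant string `g…g` inside `Xᶜ`: first it raises
coordinate `t+1` to `g` if needed, then it corrects the other coordinates; each step lowers
the Hamming distance to the target. A vertex `u ∈ X` leaves `X` exactly by setting coordinate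
`t+1` to a value `≥ g` or a higher coordinate to a nonzero value, so it has
`(L - g) + (n - t - 1)(L - 1)` neighbours outside `X`, independently of `u`; the boundary has
`|X|` times that many edges.
-/

open Function

theorem Function.update_injOn {ι β : Type*} [DecidableEq ι] (u : ι → β) :
    Set.InjOn (fun p : ι × β => update u p.1 p.2) {p | p.2 ≠ u p.1} := by
  rintro ⟨i, c⟩ hc ⟨i', c'⟩ hc' h
  simp only [Set.mem_ofPred_eq] at hc hc' h
  obtain rfl : i = i' := by
    by_contra hii'
    exact hc (by simpa [update_of_ne hii'] using congrFun h i)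
  simpa using congrFun h i

theorem hammingDist_update_lt {ι : Type*} {β : ι → Type*} [Fintype ι] [DecidableEq ι]
    [∀ i, DecidableEq (β i)] {v w : ∀ i, β i} {i : ι} (hi : v i ≠ w i) :
    hammingDist (update v i (w i)) w < hammingDist v w := by
  refine Finset.card_lt_card ⟨fun j hj => ?_, fun h => ?_⟩
  · simp only [Finset.mem_filter, Finset.mem_univ, true_and] at hj ⊢
    rcases eq_or_ne j i with rfl | hji
    · simp at hj
    · rwa [update_of_ne hji] at hj
  · simpa using h (Finset.mem_filter.2 ⟨Finset.mem_univ i, hi⟩)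

section Hamming

variable {L n : ℕ}

theorem hammingGraph_adj_update (u : Fin n → Fin L) {i : Fin n} {c : Fin L} (hc : c ≠ u i) :
    (hammingGraph L n).Adj u (update u i c) := by
  have eq_of_ne : ∀ j, u j ≠ update u i c j → j = i := fun j hj => by
    by_contra hji
    exact hj (update_of_ne hji c u).symm
  refine ⟨fun h => hc (by simpa using (congrFun h i).symm), fun j k hj hk => ?_⟩
  rw [eq_of_ne j hj, eq_of_ne k hk]

theorem hammingGraph_adj_iff {u v : Fin n → Fin L} :
    (hammingGraph L n).Adj u v ↔ ∃ i c, c ≠ u i ∧ v = update u i c := by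
  refine ⟨fun ⟨hne, huniq⟩ => ?_, fun ⟨i, c, hc, hv⟩ => hv ▸ hammingGraph_adj_update u hc⟩
  obtain ⟨i, hi⟩ := Function.ne_iff.mp hne
  refine ⟨i, v i, Ne.symm hi, funext fun j => ?_⟩
  rcases eq_or_ne j i with rfl | hji
  · simp
  · rw [update_of_ne hji]
    by_contra hvj
    exact hji (huniq j i (Ne.symm hvj) hi)

theorem hammingGraph_ncard_neighbors_mem (u : Fin n → Fin L) (Y : Set (Fin n → Fin L)) :
    {v | v ∈ Y ∧ (hammingGraph L n).Adj u v}.ncard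
      = {p : Fin n × Fin L | p.2 ≠ u p.1 ∧ update u p.1 p.2 ∈ Y}.ncard := by
  have himage : {v | v ∈ Y ∧ (hammingGraph L n).Adj u v}
      = (fun p : Fin n × Fin L => update u p.1 p.2) ''
        {p : Fin n × Fin L | p.2 ≠ u p.1 ∧ update u p.1 p.2 ∈ Y} := by
    ext v
    simp only [hammingGraph_adj_iff, Set.mem_ofPred_eq, Set.mem_image, Prod.exists]
    constructor
    · rintro ⟨hv, i, c, hc, rfl⟩
      exact ⟨i, c, ⟨hc, hv⟩, rfl⟩
    · rintro ⟨i, c, ⟨hc, hv⟩, rfl⟩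
      exact ⟨hv, i, c, hc, rfl⟩
  rw [himage, ((update_injOn u).mono fun _ hp => hp.1).ncard_image]

theorem hammingGraph_induce_connected {S : Set (Fin n → Fin L)} {w : Fin n → Fin L} (hw : w ∈ S)
    (hstep : ∀ v ∈ S, v ≠ w → ∃ i, v i ≠ w i ∧ update v i (w i) ∈ S) :
    ((hammingGraph L n).induce S).Connected := by
  suffices reach : ∀ v (hv : v ∈ S), ((hammingGraph L n).induce S).Reachable ⟨v, hv⟩ ⟨w, hw⟩ from
    (SimpleGraph.connected_iff_exists_forall_reachable _).2
      ⟨⟨w, hw⟩, fun v => (reach v.1 v.2).symm⟩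
  intro v hv
  induction hd : hammingDist v w using Nat.strong_induction_on generalizing v with
  | _ d ih =>
    by_cases hvw : v = w
    · subst hvw; rfl
    obtain ⟨i, hi, hmem⟩ := hstep v hv hvw
    have hadj : ((hammingGraph L n).induce S).Adj ⟨v, hv⟩ ⟨update v i (w i), hmem⟩ :=
      hammingGraph_adj_update v (Ne.symm hi)
    exact hadj.reachable.trans (ih _ (hd ▸ hammingDist_update_lt hi) _ hmem rfl)

end Hamming

section EdgeBoundary

variable {V : Type*} (G : SimpleGraph V) (X : Set V)

theorem edgeBoundary_eq_image :
    edgeBoundary G X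
      = (fun p : V × V => s(p.1, p.2)) '' {p | p.1 ∈ X ∧ p.2 ∉ X ∧ G.Adj p.1 p.2} := by
  ext e
  constructor
  · rintro ⟨he, u, v, rfl, hu, hv⟩
    exact ⟨(u, v), ⟨hu, hv, he⟩, rfl⟩
  · rintro ⟨⟨u, v⟩, ⟨hu, hv, huv⟩, rfl⟩
    exact ⟨huv, u, v, rfl, hu, hv⟩

theorem edgeBoundary_ncard_eq_mul [Finite V] {k : ℕ}
    (hk : ∀ u ∈ X, {v | v ∉ X ∧ G.Adj u v}.ncard = k) :
    (edgeBoundary G X).ncard = X.ncard * k := by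
  have hinj : Set.InjOn (fun p : V × V => s(p.1, p.2))
      {p : V × V | p.1 ∈ X ∧ p.2 ∉ X ∧ G.Adj p.1 p.2} := by
    rintro ⟨u, v⟩ ⟨hu, -, -⟩ ⟨u', v'⟩ ⟨-, hv', -⟩ h
    rcases Sym2.eq_iff.1 h with ⟨rfl, rfl⟩ | ⟨rfl, -⟩
    · rfl
    · exact absurd hu hv'
  have : Fintype X := Fintype.ofFinite X
  let pairs : {p : V × V | p.1 ∈ X ∧ p.2 ∉ X ∧ G.Adj p.1 p.2}
      ≃ Σ u : X, {v | v ∉ X ∧ G.Adj u v} :=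
    { toFun := fun p => ⟨⟨p.1.1, p.2.1⟩, ⟨p.1.2, p.2.2⟩⟩
      invFun := fun q => ⟨(q.1.1, q.2.1), q.1.2, q.2.2⟩
      left_inv := fun _ => rfl
      right_inv := fun _ => rfl }
  rw [edgeBoundary_eq_image, hinj.ncard_image, ← Nat.card_coe_set_eq,
    Nat.card_congr pairs, Nat.card_sigma]
  simp_rw [Nat.card_coe_set_eq, hk _ (Subtype.prop _)]
  simp

end EdgeBoundary

theorem Fin.ncard_setOf_le_val (n m : ℕ) : {i : Fin n | m ≤ (i : ℕ)}.ncard = n - m := by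
  have hsplit :=
    Finset.card_filter_add_card_filter_not (s := Finset.univ) (fun i : Fin n => (i : ℕ) < m)
  simp only [Fin.card_filter_val_lt, not_lt, Finset.card_univ, Fintype.card_fin] at hsplit
  rw [Set.ncard_eq_toFinset_card', Set.toFinset_ofPred]
  omega

/-- The union of the `g` sub-layers `0…0 f X_t…X_1`, `f < g`; coordinate `i : Fin n` is the
`(i+1)`-th coordinate of the paper. -/
def subLayerUnion (L n t g : ℕ) : Set (Fin n → Fin L) :=
  {v | (∀ i : Fin n, t < (i : ℕ) → (v i : ℕ) = 0) ∧ (∀ i : Fin n, (i : ℕ) = t → (v i : ℕ) < g)}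

section SubLayerUnion

variable {L n t g : ℕ}

theorem mem_subLayerUnion_iff_forall {v : Fin n → Fin L} :
    v ∈ subLayerUnion L n t g ↔
      ∀ i : Fin n, (t < (i : ℕ) → (v i : ℕ) = 0) ∧ ((i : ℕ) = t → (v i : ℕ) < g) :=
  forall_and.symm

theorem update_mem_subLayerUnion_iff {u : Fin n → Fin L} (hu : u ∈ subLayerUnion L n t g)
    {i : Fin n} {c : Fin L} :
    update u i c ∈ subLayerUnion L n t g ↔
      (t < (i : ℕ) → (c : ℕ) = 0) ∧ ((i : ℕ) = t → (c : ℕ) < g) := by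
  simp only [mem_subLayerUnion_iff_forall] at hu ⊢
  refine ⟨fun h => by simpa using h i, fun h j => ?_⟩
  rcases eq_or_ne j i with rfl | hji
  · simpa using h
  · rw [update_of_ne hji]
    exact hu j

theorem notMem_subLayerUnion_of_le {v : Fin n → Fin L} {i : Fin n} (hi : (i : ℕ) = t)
    (hv : g ≤ (v i : ℕ)) : v ∉ subLayerUnion L n t g :=
  fun h => (h.2 i hi).not_ge hv

theorem subLayerUnion_ncard (hL : 0 < L) (htn : t < n) (hg : g ≤ L) :
    (subLayerUnion L n t g).ncard = g * L ^ t := by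
  classical
  let box (i : Fin n) : Finset (Fin L) :=
    {c | (t < (i : ℕ) → (c : ℕ) = 0) ∧ ((i : ℕ) = t → (c : ℕ) < g)}
  have hpi : subLayerUnion L n t g = ↑(Fintype.piFinset box) := by
    ext v
    simp [mem_subLayerUnion_iff_forall, box]
  have hbox : ∀ i, (box i).card = if (i : ℕ) < t then L else if (i : ℕ) = t then g else 1 := by
    intro i
    rcases lt_trichotomy (i : ℕ) t with hi | hi | hi
    · simp [box, hi, hi.ne, not_lt.2 hi.le]
    · have := Fin.card_filter_val_lt (n := L) (m := g)
      simp_all [box]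
    · have := Fin.card_filter_val_lt (n := L) (m := 1)
      simp_all [box, hi.ne', not_lt.2 hi.le, Nat.one_le_iff_ne_zero, hL.ne']
  rw [hpi, Set.ncard_coe_finset, Fintype.card_piFinset, Finset.prod_congr rfl fun i _ => hbox i,
    Fin.prod_univ_eq_prod_range (fun i => if i < t then L else if i = t then g else 1)]
  obtain ⟨m, rfl⟩ : ∃ m, n = t + 1 + m := ⟨n - t - 1, by omega⟩
  have hhead : ∀ i ∈ Finset.range t, (if i < t then L else if i = t then g else 1) = L :=
    fun i hi => if_pos (Finset.mem_range.1 hi)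
  have htail : ∀ i ∈ Finset.range m,
      (if t + 1 + i < t then L else if t + 1 + i = t then g else 1) = 1 :=
    fun i _ => by simp only [if_neg (by omega : ¬t + 1 + i < t), if_neg (by omega : t + 1 + i ≠ t)]
  rw [Finset.prod_range_add, Finset.prod_range_succ, Finset.prod_congr rfl hhead,
    Finset.prod_eq_one htail]
  simp [mul_comm]

theorem subLayerUnion_induce_connected (hL : 0 < L) (hg : 0 < g) :
    ((hammingGraph L n).induce (subLayerUnion L n t g)).Connected := by
  refine hammingGraph_induce_connected (w := fun _ => ⟨0, hL⟩)
    ⟨fun _ _ => rfl, fun _ _ => hg⟩ fun v hv hv0 => ?_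
  obtain ⟨i, hi⟩ := Function.ne_iff.1 hv0
  exact ⟨i, hi, (update_mem_subLayerUnion_iff hv).2 ⟨fun _ => rfl, fun _ => hg⟩⟩

theorem subLayerUnion_compl_induce_connected (htn : t < n) (hg : g < L) :
    ((hammingGraph L n).induce (subLayerUnion L n t g)ᶜ).Connected := by
  obtain ⟨t, rfl⟩ : ∃ t' : Fin n, (t' : ℕ) = t := ⟨⟨t, htn⟩, rfl⟩
  refine hammingGraph_induce_connected (w := fun _ => ⟨g, hg⟩)
    (notMem_subLayerUnion_of_le rfl le_rfl) fun v _ hvw => ?_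
  by_cases hvt : g ≤ (v t : ℕ)
  · obtain ⟨i, hi⟩ := Function.ne_iff.1 hvw
    refine ⟨i, hi, notMem_subLayerUnion_of_le rfl ?_⟩
    rcases eq_or_ne t i with rfl | hti
    · simp
    · rwa [update_of_ne hti]
  · exact ⟨t, fun h => hvt (by simp [h]), notMem_subLayerUnion_of_le rfl (by simp)⟩

theorem ncard_neighbors_notMem_subLayerUnion (htn : t < n) (hg : g ≤ L) {u : Fin n → Fin L}
    (hu : u ∈ subLayerUnion L n t g) :
    {v | v ∉ subLayerUnion L n t g ∧ (hammingGraph L n).Adj u v}.ncard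
      = (L - 1) * (n - t) - (g - 1) := by
  obtain ⟨t, rfl⟩ : ∃ t' : Fin n, (t' : ℕ) = t := ⟨⟨t, htn⟩, rfl⟩
  have hg0 : 0 < g := (Nat.zero_le _).trans_lt (hu.2 t rfl)
  have hout : {p : Fin n × Fin L | p.2 ≠ u p.1 ∧ update u p.1 p.2 ∈ (subLayerUnion L n t g)ᶜ}
      = {i : Fin n | (t : ℕ) + 1 ≤ i} ×ˢ {c : Fin L | 1 ≤ (c : ℕ)}
        ∪ {t} ×ˢ {c : Fin L | g ≤ (c : ℕ)} := by
    ext ⟨i, c⟩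
    have hui := hu.1 i
    have hut := hu.2 i
    simp only [Set.mem_ofPred_eq, Set.mem_compl_iff, update_mem_subLayerUnion_iff hu,
      Set.mem_union, Set.mem_prod, Set.mem_singleton_iff, Fin.ext_iff]
    omega
  have hdisj : Disjoint ({i : Fin n | (t : ℕ) + 1 ≤ i} ×ˢ {c : Fin L | 1 ≤ (c : ℕ)})
      ({t} ×ˢ {c : Fin L | g ≤ (c : ℕ)}) := by
    rw [Set.disjoint_left]
    rintro ⟨i, c⟩ ⟨hi, -⟩ ⟨rfl, -⟩
    exact (Nat.lt_succ_self _).not_ge hi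
  change {v | v ∈ (subLayerUnion L n t g)ᶜ ∧ _}.ncard = _
  rw [hammingGraph_ncard_neighbors_mem, hout, Set.ncard_union_eq hdisj, Set.ncard_prod,
    Set.ncard_prod, Fin.ncard_setOf_le_val, Fin.ncard_setOf_le_val, Fin.ncard_setOf_le_val,
    Set.ncard_singleton]
  obtain ⟨a, ha⟩ : ∃ a, n = t + 1 + a := ⟨n - t - 1, by omega⟩
  rw [show n - (t + 1) = a by omega, show n - t = a + 1 by omega, mul_add, mul_comm]
  omega

end SubLayerUnion

theorem stmt17_general (L n t g : ℕ) (hn : 2 ≤ n) (ht : t ≤ n - 1)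
    (hg1 : 1 ≤ g) (hg2 : g ≤ L - 1)
    (X : Set (Fin n → Fin L))
    (hX : X = {v | (∀ i : Fin n, t < (i : ℕ) → (v i : ℕ) = 0) ∧
                   (∀ i : Fin n, (i : ℕ) = t → (v i : ℕ) < g)}) :
    X.ncard = g * L ^ t ∧
      ((hammingGraph L n).induce X).Connected ∧
      ((hammingGraph L n).induce Xᶜ).Connected ∧
      (edgeBoundary (hammingGraph L n) X).ncard
        = g * ((L - 1) * (n - t) - (g - 1)) * L ^ t := by
  change X = subLayerUnion L n t g at hX
  subst hX
  have htn : t < n := by omega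
  have hcard := subLayerUnion_ncard (by omega) htn (by omega : g ≤ L)
  refine ⟨hcard, subLayerUnion_induce_connected (by omega) hg1,
    subLayerUnion_compl_induce_connected htn (by omega), ?_⟩
  rw [edgeBoundary_ncard_eq_mul _ _ fun u hu =>
    ncard_neighbors_notMem_subLayerUnion htn (by omega) hu, hcard, mul_right_comm]

theorem stmt17 (L n t g : ℕ) (hL : 2 ≤ L) (hn : 2 ≤ n) (ht : t ≤ n - 1)
    (hg1 : 1 ≤ g) (hg2 : g ≤ L - 1)
    (X : Set (Fin n → Fin L))
    (hX : X = {v | (∀ i : Fin n, t < (i : ℕ) → (v i : ℕ) = 0) ∧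
                   (∀ i : Fin n, (i : ℕ) = t → (v i : ℕ) < g)}) :
    X.ncard = g * L ^ t ∧
      ((hammingGraph L n).induce X).Connected ∧
      ((hammingGraph L n).induce Xᶜ).Connected ∧
      (edgeBoundary (hammingGraph L n) X).ncard
        = g * ((L - 1) * (n - t) - (g - 1)) * L ^ t :=
  stmt17_general L n t g hn ht hg1 hg2 X hX
end
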